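/- arXiv:2002.11680 — 5 statements merged into one kernel-verified Lean document; each statement's English description precedes it below -/
import Mathlib

section
/- Let I : ℝⁿ → ℝ be a continuous convex function attaining its global minimum at a point μ ∈ ℝⁿ with I(μ) = 0. Let U ⊆ ℝⁿ be a nonempty bounded open set with μ ∉ U. Then inf_{θ ∈ U} I(θ) = inf_{θ ∈ ∂U} I(θ), where ∂U denotes the topological boundary of U, and this common infimum is attained at some point of ∂U. -/
/-- if `I : ℝⁿ → ℝ` is continuous and convex, attains its global
minimum at `μ` with `I(μ) = 0`, and `U` is a nonempty bounded open set with
`μ ∉ U`, then `inf_{θ ∈ U} I(θ) = inf_{θ ∈ ∂U} I(θ)`, and this common infimum is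
attained at some point of the boundary `∂U`. -/
theorem inf_on_open_eq_inf_on_frontier {n : ℕ}
    (I : (Fin n → ℝ) → ℝ) (μ : Fin n → ℝ)
    (hcont : Continuous I) (hconv : ConvexOn ℝ Set.univ I)
    (hmin : ∀ x : Fin n → ℝ, I μ ≤ I x) (hI0 : I μ = 0)
    (U : Set (Fin n → ℝ)) (hUne : U.Nonempty) (hUopen : IsOpen U)
    (hUbdd : Bornology.IsBounded U) (hμU : μ ∉ U) :
    sInf (I '' U) = sInf (I '' frontier U) ∧
      ∃ θ ∈ frontier U, I θ = sInf (I '' U) := by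
  -- compact closure
  have hK : IsCompact (closure U) := hUbdd.isCompact_closure
  have hKne : (closure U).Nonempty := hUne.closure
  obtain ⟨θ₀, hθ₀K, hθ₀min⟩ := hK.exists_isMinOn hKne hcont.continuousOn
  set m := I θ₀ with hm
  have hmlb : ∀ x ∈ closure U, m ≤ I x := fun x hx => hθ₀min hx
  -- sInf (I '' U) = m
  have hbdd : BddBelow (I '' U) := by
    refine ⟨m, fun y hy => ?_⟩
    obtain ⟨x, hx, rfl⟩ := hy
    exact hmlb x (subset_closure hx)
  have hImK : I '' closure U ⊆ closure (I '' U) :=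
    image_closure_subset_closure_image hcont
  have hclos_lb : closure (I '' U) ⊆ Set.Ici (sInf (I '' U)) :=
    closure_minimal (fun y hy => csInf_le hbdd hy) isClosed_Ici
  have hinf_eq : sInf (I '' U) = m := by
    apply le_antisymm
    · exact hclos_lb (hImK ⟨θ₀, hθ₀K, rfl⟩)
    · exact le_csInf (hUne.image I) (fun y hy => by
        obtain ⟨x, hx, rfl⟩ := hy; exact hmlb x (subset_closure hx))
  -- find θ₁ ∈ frontier U with I θ₁ = m
  have hm0 : 0 ≤ m := hI0 ▸ hmin θ₀
  have hexist : ∃ θ ∈ frontier U, I θ = m := by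
    by_cases hθ₀U : θ₀ ∈ U
    · by_cases hμc : μ ∈ closure U
      · -- μ ∈ frontier U
        have hμf : μ ∈ frontier U := ⟨hμc, by rwa [hUopen.interior_eq]⟩
        refine ⟨μ, hμf, le_antisymm (hI0 ▸ hm0) (hmlb μ hμc)⟩
      · -- segment from μ to θ₀ crosses frontier
        have hseg : ∃ x ∈ segment ℝ μ θ₀, x ∈ frontier U := by
          by_contra h
          push_neg at h
          have hsub : segment ℝ μ θ₀ ⊆ interior U ∪ (closure U)ᶜ := by
            intro x hx
            rcases Classical.em (x ∈ closure U) with hc | hc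
            · left
              rcases Classical.em (x ∈ interior U) with hi | hi
              · exact hi
              · exact absurd ⟨hc, hi⟩ (h x hx)
            · exact Or.inr hc
          have hdisj : Disjoint (interior U) (closure U)ᶜ :=
            Set.disjoint_compl_right_iff_subset.mpr
              (interior_subset.trans subset_closure)
          rcases IsPreconnected.subset_or_subset isOpen_interior
              (isClosed_closure).isOpen_compl hdisj hsub
              (convex_segment μ θ₀).isPreconnected with hs | hs
          · exact hμc (subset_closure (interior_subset (hs (left_mem_segment ℝ μ θ₀))))
          · exact (hs (right_mem_segment ℝ μ θ₀)) (subset_closure hθ₀U)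
        obtain ⟨x, hxseg, hxf⟩ := hseg
        obtain ⟨a, b, ha, hb, hab, rfl⟩ := hxseg
        refine ⟨_, hxf, le_antisymm ?_ (hmlb _ hxf.1)⟩
        calc I (a • μ + b • θ₀) ≤ a * I μ + b * I θ₀ :=
              hconv.2 (Set.mem_univ μ) (Set.mem_univ θ₀) ha hb hab
          _ = b * m := by rw [hI0]; ring
          _ ≤ 1 * m := by
              have hb1 : b ≤ 1 := by linarith
              exact mul_le_mul_of_nonneg_right hb1 hm0
          _ = m := one_mul m
    · exact ⟨θ₀, ⟨hθ₀K, by rwa [hUopen.interior_eq]⟩, rfl⟩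
  obtain ⟨θ₁, hθ₁f, hθ₁m⟩ := hexist
  have hfinf : sInf (I '' frontier U) = m := by
    apply le_antisymm
    · exact csInf_le ⟨m, fun y hy => by
        obtain ⟨x, hx, rfl⟩ := hy; exact hmlb x hx.1⟩ ⟨θ₁, hθ₁f, hθ₁m⟩
    · exact le_csInf ⟨I θ₁, θ₁, hθ₁f, rfl⟩ (fun y hy => by
        obtain ⟨x, hx, rfl⟩ := hy; exact hmlb x hx.1)
  exact ⟨hinf_eq.trans hfinf.symm, θ₁, hθ₁f, hθ₁m.trans hinf_eq.symm⟩
end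

section
/- Let Θ ⊆ ℝⁿ be a convex set, μ ∈ Θ, f : Θ → ℝ a continuous function, and α ∈ ℝ with f(μ) < α. Let I : ℝⁿ → ℝ be a continuous strictly convex function with I(μ) = 0 and I(θ) > 0 for all θ ≠ μ. Suppose the set S = {θ ∈ Θ : f(θ) ≥ α} is nonempty and θ₀ ∈ S satisfies I(θ₀) = inf_{θ ∈ S} I(θ). Then f(θ₀) = α. -/
/-- claim (i) in the proof of Proposition 2: let `Θ ⊆ ℝⁿ` be convex,
`μ ∈ Θ`, `f` continuous on `Θ` with `f(μ) < α`, and let `I` be a continuous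
strictly convex function with `I(μ) = 0` and `I > 0` away from `μ`. If
`S = {θ ∈ Θ : f(θ) ≥ α}` is nonempty and `θ₀ ∈ S` minimizes `I` over `S`, then
`f(θ₀) = α`. -/
theorem minimizer_on_level_set {n : ℕ}
    (Θ : Set (Fin n → ℝ)) (hΘ : Convex ℝ Θ) (μ : Fin n → ℝ) (hμ : μ ∈ Θ)
    (f : (Fin n → ℝ) → ℝ) (hf : ContinuousOn f Θ) (α : ℝ) (hα : f μ < α)
    (I : (Fin n → ℝ) → ℝ) (hIcont : Continuous I)
    (hIconv : StrictConvexOn ℝ Set.univ I)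
    (hI0 : I μ = 0) (hIpos : ∀ θ : Fin n → ℝ, θ ≠ μ → 0 < I θ)
    (S : Set (Fin n → ℝ)) (hSdef : S = {θ ∈ Θ | α ≤ f θ}) (hSne : S.Nonempty)
    (θ₀ : Fin n → ℝ) (hθ₀ : θ₀ ∈ S) (hmin : I θ₀ = sInf (I '' S)) :
    f θ₀ = α := by
  rw [hSdef] at hθ₀
  obtain ⟨hθ₀Θ, hθ₀f⟩ := hθ₀
  by_contra hne
  have hgt : α < f θ₀ := lt_of_le_of_ne hθ₀f (Ne.symm hne)
  have hθ₀μ : θ₀ ≠ μ := by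
    intro h; rw [h] at hgt; linarith
  have hIθ₀ : 0 < I θ₀ := hIpos θ₀ hθ₀μ
  -- the path from μ to θ₀
  set γ : ℝ → (Fin n → ℝ) := fun t => (1 - t) • μ + t • θ₀ with hγ
  have hγcont : Continuous γ := by fun_prop
  have hγmaps : ∀ t ∈ Set.Icc (0:ℝ) 1, γ t ∈ Θ := by
    intro t ht
    exact hΘ hμ hθ₀Θ (by linarith [ht.2]) ht.1 (by ring)
  have hγ1 : γ 1 = θ₀ := by simp [hγ]
  have hcw : ContinuousWithinAt (f ∘ γ) (Set.Icc (0:ℝ) 1) 1 := by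
    apply ContinuousOn.comp hf hγcont.continuousOn hγmaps
    exact ⟨le_of_lt one_pos, le_refl 1⟩
  have hev : ∀ᶠ t in nhdsWithin 1 (Set.Icc (0:ℝ) 1), α < f (γ t) := by
    have := hcw.tendsto
    rw [Function.comp_apply, hγ1] at this
    exact this (Ioi_mem_nhds hgt)
  have hle : nhdsWithin (1:ℝ) (Set.Ioo 0 1) ≤ nhdsWithin 1 (Set.Icc 0 1) :=
    nhdsWithin_mono 1 Set.Ioo_subset_Icc_self
  have hnb : (nhdsWithin (1:ℝ) (Set.Ioo 0 1)).NeBot := by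
    apply mem_closure_iff_nhdsWithin_neBot.mp
    rw [closure_Ioo one_ne_zero.symm]
    exact ⟨le_of_lt one_pos, le_refl 1⟩
  have hev' : ∀ᶠ t in nhdsWithin (1:ℝ) (Set.Ioo 0 1),
      α < f (γ t) ∧ t ∈ Set.Ioo (0:ℝ) 1 :=
    (hev.filter_mono hle).and self_mem_nhdsWithin
  obtain ⟨t, htf, ht0, ht1⟩ := hev'.exists
  -- γ t ∈ S
  have hpS : γ t ∈ S := by
    rw [hSdef]
    exact ⟨hγmaps t ⟨le_of_lt ht0, le_of_lt ht1⟩, le_of_lt htf⟩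
  -- I (γ t) < I θ₀
  have hIlt : I (γ t) < I θ₀ := by
    have := hIconv.2 (Set.mem_univ μ) (Set.mem_univ θ₀) (Ne.symm hθ₀μ)
      (by linarith : (0:ℝ) < 1 - t) ht0 (by ring)
    rw [hI0] at this
    calc I (γ t) < (1 - t) * 0 + t * I θ₀ := this
      _ = t * I θ₀ := by ring
      _ < I θ₀ := by nlinarith
  have hbdd : BddBelow (I '' S) := by
    refine ⟨0, ?_⟩
    rintro x ⟨θ, _, rfl⟩
    by_cases h : θ = μ
    · rw [h, hI0]
    · exact le_of_lt (hIpos θ h)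
  have : sInf (I '' S) ≤ I (γ t) := csInf_le hbdd ⟨γ t, hpS, rfl⟩
  rw [← hmin] at this
  linarith
end

section
/- Let Θ ⊆ ℝⁿ be a convex set, μ ∈ Θ, f : Θ → ℝ a continuous function, and α ∈ ℝ with f(μ) < α. Let I : ℝⁿ → ℝ be a continuous strictly convex function with I(μ) = 0 and I(θ) > 0 for all θ ≠ μ. Suppose the set S = {θ ∈ Θ : f(θ) ≥ α} is nonempty and θ₀ ∈ S satisfies I(θ₀) = inf_{θ ∈ S} I(θ). Let W be the connected component of the sublevel set {θ ∈ Θ : f(θ) ≤ α} containing μ. Then θ₀ ∈ W; moreover f(θ) < α for every point θ ≠ θ₀ on the segment joining μ and θ₀. -/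
/-- claim (ii) in the proof of Proposition 2: let `Θ ⊆ ℝⁿ` be
convex, `μ ∈ Θ`, `f` continuous on `Θ` with `f(μ) < α`, and let `I` be a
continuous strictly convex function with `I(μ) = 0` and `I > 0` away from `μ`.
If `S = {θ ∈ Θ : f(θ) ≥ α}` is nonempty and `θ₀ ∈ S` minimizes `I` over `S`,
then `θ₀` lies in the connected component `W` of the sublevel set
`{θ ∈ Θ : f(θ) ≤ α}` containing `μ`; moreover `f(θ) < α` for every point
`θ ≠ θ₀` of the segment joining `μ` and `θ₀`. -/
theorem minimizer_in_component_and_segment {n : ℕ}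
    (Θ : Set (Fin n → ℝ)) (hΘ : Convex ℝ Θ) (μ : Fin n → ℝ) (hμ : μ ∈ Θ)
    (f : (Fin n → ℝ) → ℝ) (hf : ContinuousOn f Θ) (α : ℝ) (hα : f μ < α)
    (I : (Fin n → ℝ) → ℝ) (hIcont : Continuous I)
    (hIconv : StrictConvexOn ℝ Set.univ I)
    (hI0 : I μ = 0) (hIpos : ∀ θ : Fin n → ℝ, θ ≠ μ → 0 < I θ)
    (S : Set (Fin n → ℝ)) (hSdef : S = {θ ∈ Θ | α ≤ f θ}) (hSne : S.Nonempty)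
    (θ₀ : Fin n → ℝ) (hθ₀ : θ₀ ∈ S) (hmin : I θ₀ = sInf (I '' S)) :
    θ₀ ∈ connectedComponentIn {θ ∈ Θ | f θ ≤ α} μ ∧
      ∀ θ ∈ segment ℝ μ θ₀, θ ≠ θ₀ → f θ < α := by
  rw [hSdef] at hθ₀ hSne hmin
  obtain ⟨hθ₀Θ, hθ₀α⟩ := hθ₀
  have hμθ₀ : θ₀ ≠ μ := by
    rintro rfl; exact absurd hθ₀α (not_le.2 hα)
  have hIθ₀ : 0 < I θ₀ := hIpos θ₀ hμθ₀
  have hIpos' : ∀ θ : Fin n → ℝ, 0 ≤ I θ := by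
    intro θ
    by_cases h : θ = μ
    · simp [h, hI0]
    · exact (hIpos θ h).le
  have hbdd : BddBelow (I '' {θ ∈ Θ | α ≤ f θ}) := by
    exact ⟨0, by rintro x ⟨y, _, rfl⟩; exact hIpos' y⟩
  have hsegΘ : segment ℝ μ θ₀ ⊆ Θ := hΘ.segment_subset hμ hθ₀Θ
  -- main segment claim
  have hseg : ∀ θ ∈ segment ℝ μ θ₀, θ ≠ θ₀ → f θ < α := by
    rintro θ ⟨a, b, ha, hb, hab, rfl⟩ hne
    have hb1 : b < 1 := by
      rcases lt_or_eq_of_le (by linarith : b ≤ 1) with h | h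
      · exact h
      · exfalso; apply hne
        have : a = 0 := by linarith
        simp [this, h]
    have hIle : I (a • μ + b • θ₀) ≤ a * I μ + b * I θ₀ :=
      hIconv.convexOn.2 (Set.mem_univ _) (Set.mem_univ _) ha hb hab
    have hIlt : I (a • μ + b • θ₀) < I θ₀ := by
      have : b * I θ₀ < I θ₀ := by nlinarith
      calc I (a • μ + b • θ₀) ≤ a * I μ + b * I θ₀ := hIle
        _ = b * I θ₀ := by rw [hI0]; ring
        _ < I θ₀ := this
    by_contra h
    push_neg at h
    have hmem : a • μ + b • θ₀ ∈ {θ ∈ Θ | α ≤ f θ} :=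
      ⟨hsegΘ ⟨a, b, ha, hb, hab, rfl⟩, h⟩
    have : I θ₀ ≤ I (a • μ + b • θ₀) := hmin ▸ csInf_le hbdd ⟨_, hmem, rfl⟩
    linarith
  refine ⟨?_, hseg⟩
  -- f θ₀ = α
  have hfθ₀ : f θ₀ = α := by
    refine le_antisymm ?_ hθ₀α
    by_contra h
    push_neg at h
    set g : ℝ → (Fin n → ℝ) := fun t => (1 - t) • μ + t • θ₀ with hg
    have hgseg : ∀ t ∈ Set.Icc (0:ℝ) 1, g t ∈ segment ℝ μ θ₀ := by
      rintro t ⟨ht0, ht1⟩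
      exact ⟨1 - t, t, by linarith, ht0, by ring, rfl⟩
    have hgcont : ContinuousOn (f ∘ g) (Set.Icc (0:ℝ) 1) := by
      apply hf.comp
      · exact (Continuous.add (by continuity) (by continuity)).continuousOn
      · intro t ht; exact hsegΘ (hgseg t ht)
    have h1 : ContinuousWithinAt (f ∘ g) (Set.Ico (0:ℝ) 1) 1 :=
      (hgcont 1 ⟨by norm_num, le_refl 1⟩).mono Set.Ico_subset_Icc_self
    have hg1 : (f ∘ g) 1 = f θ₀ := by simp [hg]
    have hev : ∀ᶠ t in nhdsWithin 1 (Set.Ico (0:ℝ) 1), α < (f ∘ g) t := by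
      have := h1.eventually (p := fun y => α < y) ?_
      · exact this
      · rw [hg1]; exact eventually_gt_nhds h
    have hne : (nhdsWithin (1:ℝ) (Set.Ico (0:ℝ) 1)).NeBot := by
      apply mem_closure_iff_nhdsWithin_neBot.mp
      rw [closure_Ico (by norm_num : (0:ℝ) ≠ 1)]
      exact ⟨le_of_lt one_pos, le_refl 1⟩
    obtain ⟨t, ht, htα⟩ := (hev.and (eventually_mem_nhdsWithin)).exists
    obtain ⟨ht0, ht1⟩ := htα
    have hgt : g t ∈ segment ℝ μ θ₀ := hgseg t ⟨ht0, ht1.le⟩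
    have hgtne : g t ≠ θ₀ := by
      intro heq
      apply hμθ₀.symm
      have h1t : (1 - t) ≠ 0 := by intro hc; linarith
      have : (1 - t) • μ = (1 - t) • θ₀ := by
        have := heq
        simp only [hg] at this
        have h2 : (1 - t) • θ₀ + t • θ₀ = θ₀ := by
          rw [← add_smul]; simp
        rw [← h2] at this
        linear_combination (norm := module) this
      exact smul_right_injective _ h1t this
    exact absurd ht (not_lt.2 (hseg (g t) hgt hgtne).le)
  have hsub : segment ℝ μ θ₀ ⊆ {θ ∈ Θ | f θ ≤ α} := by
    intro θ hθ
    refine ⟨hsegΘ hθ, ?_⟩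
    by_cases hne : θ = θ₀
    · rw [hne, hfθ₀]
    · exact (hseg θ hθ hne).le
  have hpc : IsPreconnected (segment ℝ μ θ₀) := (convex_segment μ θ₀).isPreconnected
  exact hpc.subset_connectedComponentIn (left_mem_segment ℝ μ θ₀) hsub
    (right_mem_segment ℝ μ θ₀)
end

section
/- Let H ∈ ℝ^{p×p} be a symmetric positive definite matrix, h ∈ ℝ^p, A ∈ ℝ^{q×p}, E ∈ ℝ^{q×r}, and b ∈ ℝ^q. For each θ in the feasible parameter set Θ = {θ ∈ ℝ^r : ∃ g ∈ ℝ^p, A g ≤ b + E θ}, let g*(θ) denote the unique minimizer of (1/2)gᵀHg + hᵀg over {g ∈ ℝ^p : A g ≤ b + E θ}. Then the map θ ↦ g*(θ) is continuous on Θ. -/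
open Matrix


lemma abs_le_pinorm {n : ℕ} (v : Fin n → ℝ) (k : Fin n) : |v k| ≤ ‖v‖ := by
  simpa [Real.norm_eq_abs] using norm_le_pi_norm v k

lemma dot_abs_le {n : ℕ} (u v : Fin n → ℝ) : |u ⬝ᵥ v| ≤ (∑ k, |u k|) * ‖v‖ := by
  rw [dotProduct]
  calc |∑ k, u k * v k| ≤ ∑ k, |u k * v k| := Finset.abs_sum_le_sum_abs _ _
    _ ≤ ∑ k, |u k| * ‖v‖ := Finset.sum_le_sum fun k _ => by
        rw [abs_mul]
        exact mul_le_mul_of_nonneg_left (abs_le_pinorm v k) (abs_nonneg _)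
    _ = (∑ k, |u k|) * ‖v‖ := by rw [Finset.sum_mul]

lemma pinorm_le {n : ℕ} {v : Fin n → ℝ} {c : ℝ} (hc : 0 ≤ c) (h : ∀ k, |v k| ≤ c) : ‖v‖ ≤ c := by
  refine (pi_norm_le_iff_of_nonneg hc).2 fun k => ?_
  simpa [Real.norm_eq_abs] using h k

lemma dot_split {p : ℕ} (u w : Fin (p+1) → ℝ) :
    u ⬝ᵥ w = (fun k : Fin p => u k.castSucc) ⬝ᵥ (fun k : Fin p => w k.castSucc)
      + u (Fin.last p) * w (Fin.last p) := by
  simp [dotProduct, Fin.sum_univ_castSucc]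

lemma dot_div_sub {p : ℕ} (a b w : Fin p → ℝ) (ca cb : ℝ) :
    (fun k => a k / ca - b k / cb) ⬝ᵥ w = (a ⬝ᵥ w) / ca - (b ⬝ᵥ w) / cb := by
  simp [dotProduct, sub_mul, Finset.sum_sub_distrib, Finset.sum_div, div_mul_eq_mul_div]

lemma div_lb_pos {d s c : ℝ} (hc : 0 < c) (hd : -s ≤ d) : -(s * |c|⁻¹) ≤ d / c := by
  have h : (-s) / c ≤ d / c := (div_le_div_iff_of_pos_right hc).2 hd
  rw [abs_of_pos hc]
  rwa [neg_div, div_eq_mul_inv] at h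

lemma div_ub_neg {d s c : ℝ} (hc : c < 0) (hd : -s ≤ d) : d / c ≤ s * |c|⁻¹ := by
  have : d / c ≤ (-s) / c := (div_le_div_right_of_neg hc).2 hd
  calc d / c ≤ (-s)/c := this
    _ = s * |c|⁻¹ := by rw [abs_of_neg hc, neg_div, div_eq_mul_inv, ← mul_neg, neg_inv]

/-- Hoffman-type bound for linear inequality systems, proved by
Fourier–Motzkin elimination / induction on the number of variables. -/
lemma hoffman0 : ∀ (p : ℕ) (ι : Type) [Fintype ι] (B : ι → Fin p → ℝ),
    ∃ M : ℝ, 0 ≤ M ∧ ∀ (d : ι → ℝ) (s : ℝ), 0 ≤ s → (∀ i, -s ≤ d i) →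
      (∃ w : Fin p → ℝ, ∀ i, B i ⬝ᵥ w ≤ d i) →
      ∃ w : Fin p → ℝ, (∀ i, B i ⬝ᵥ w ≤ d i) ∧ ∀ k, |w k| ≤ M * s := by
  intro p
  induction p with
  | zero =>
    intro ι _ B
    refine ⟨0, le_refl 0, fun d s hs hds ⟨w₀, hw₀⟩ => ⟨0, fun i => ?_, fun k => Fin.elim0 k⟩⟩
    have := hw₀ i
    simp only [dotProduct, Finset.univ_eq_empty, Finset.sum_empty] at this ⊢
    exact this
  | succ p IH =>
    intro ι _ B
    classical
    set β : ι → ℝ := fun i => B i (Fin.last p) with hβ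
    set B' : ι → Fin p → ℝ := fun i k => B i k.castSucc with hB'
    let ι' : Type := {i : ι // β i = 0} ⊕ ({i : ι // 0 < β i} × {j : ι // β j < 0})
    let C : ι' → Fin p → ℝ := fun x => match x with
      | .inl i => B' i.1
      | .inr (i, j) => fun k => B' i.1 k / β i.1 - B' j.1 k / β j.1
    obtain ⟨M', hM'0, hM'⟩ := IH ι' C
    set K₁ : ℝ := 1 + ∑ i, |β i|⁻¹ with hK₁
    have hK₁1 : 1 ≤ K₁ := by
      rw [hK₁]
      have : (0:ℝ) ≤ ∑ i, |β i|⁻¹ := Finset.sum_nonneg fun i _ => by positivity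
      linarith
    have hK₁pair : ∀ i j : ι, 0 < β i → β j < 0 → |β i|⁻¹ + |β j|⁻¹ ≤ K₁ := by
      intro i j hi hj
      have hij : i ≠ j := by rintro rfl; exact absurd hi (not_lt.2 hj.le)
      have hsub : ∑ x ∈ ({i, j} : Finset ι), |β x|⁻¹ ≤ ∑ x, |β x|⁻¹ :=
        Finset.sum_le_sum_of_subset_of_nonneg (Finset.subset_univ _)
          (fun x _ _ => by positivity)
      rw [Finset.sum_pair hij] at hsub
      rw [hK₁]; linarith
    set K₂ : ℝ := 1 + ∑ i, (1 + ∑ k, |B' i k|) * |β i|⁻¹ with hK₂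
    have hK₂1 : 1 ≤ K₂ := by
      rw [hK₂]
      have : (0:ℝ) ≤ ∑ i, (1 + ∑ k, |B' i k|) * |β i|⁻¹ :=
        Finset.sum_nonneg fun i _ => by positivity
      linarith
    have hK₂i : ∀ i : ι, (1 + ∑ k, |B' i k|) * |β i|⁻¹ ≤ K₂ := by
      intro i
      have h1 : (1 + ∑ k, |B' i k|) * |β i|⁻¹ ≤ ∑ j, (1 + ∑ k, |B' j k|) * |β j|⁻¹ :=
        Finset.single_le_sum (f := fun j => (1 + ∑ k, |B' j k|) * |β j|⁻¹)
          (fun j _ => by positivity) (Finset.mem_univ i)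
      rw [hK₂]; linarith
    have hM'K₁ : 0 ≤ M' * K₁ := by positivity
    refine ⟨M' * K₁ + K₂ * (1 + M' * K₁), by positivity, ?_⟩
    intro d s hs hds ⟨w₀, hw₀⟩
    set w₀' : Fin p → ℝ := fun k => w₀ k.castSucc with hw₀'
    set t₀ : ℝ := w₀ (Fin.last p) with ht₀
    have hsplit : ∀ (i : ι) (w : Fin (p+1) → ℝ),
        B i ⬝ᵥ w = B' i ⬝ᵥ (fun k : Fin p => w k.castSucc) + β i * w (Fin.last p) :=
      fun i w => dot_split (B i) w
    let d' : ι' → ℝ := fun x => match x with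
      | .inl i => d i.1
      | .inr (i, j) => d i.1 / β i.1 - d j.1 / β j.1
    -- feasibility of the projected system
    have hfeas' : ∀ x : ι', C x ⬝ᵥ w₀' ≤ d' x := by
      rintro (⟨i, hi0⟩ | ⟨⟨i, hip⟩, ⟨j, hjn⟩⟩)
      · have hwi := hw₀ i
        rw [hsplit i w₀, hi0] at hwi
        simpa [C, d'] using hwi
      · have hi := hw₀ i; have hj := hw₀ j
        rw [hsplit i w₀] at hi; rw [hsplit j w₀] at hj
        show (fun k => B' i k / β i - B' j k / β j) ⬝ᵥ w₀' ≤ d i / β i - d j / β j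
        rw [dot_div_sub]
        have h1 : (B' i ⬝ᵥ w₀' + β i * t₀) / β i ≤ d i / β i :=
          (div_le_div_iff_of_pos_right hip).2 hi
        have h2 : d j / β j ≤ (B' j ⬝ᵥ w₀' + β j * t₀) / β j :=
          (div_le_div_right_of_neg hjn).2 hj
        rw [add_div, mul_div_cancel_left₀ _ hip.ne'] at h1
        rw [add_div, mul_div_cancel_left₀ _ hjn.ne] at h2
        linarith
    -- lower bound on the projected right-hand side
    have hd'lb : ∀ x : ι', -(K₁ * s) ≤ d' x := by
      rintro (⟨i, hi0⟩ | ⟨⟨i, hip⟩, ⟨j, hjn⟩⟩)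
      · show -(K₁ * s) ≤ d i
        nlinarith [hds i, hK₁1, hs]
      · show -(K₁ * s) ≤ d i / β i - d j / β j
        have h1 := div_lb_pos hip (hds i)
        have h2 := div_ub_neg hjn (hds j)
        have h3 := hK₁pair i j hip hjn
        nlinarith
    obtain ⟨w', hw'feas, hw'bd⟩ := hM' d' (K₁ * s) (by positivity) hd'lb ⟨w₀', hfeas'⟩
    have hw'norm : ‖w'‖ ≤ M' * (K₁ * s) := pinorm_le (by positivity) hw'bd
    -- bounds for lower/upper limits of the last variable
    set S : ℝ := s + M' * K₁ * s with hS
    have hS0 : 0 ≤ S := by positivity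
    set R : ℝ := K₂ * S with hR
    have hR0 : 0 ≤ R := by positivity
    set Q : ι → ℝ := fun i => (d i - B' i ⬝ᵥ w') / β i with hQ
    have hcbd : ∀ i : ι, s + |B' i ⬝ᵥ w'| ≤ (1 + ∑ k, |B' i k|) * S := by
      intro i
      have h1 : |B' i ⬝ᵥ w'| ≤ (∑ k, |B' i k|) * ‖w'‖ := dot_abs_le _ _
      have h2 : (0:ℝ) ≤ ∑ k, |B' i k| := Finset.sum_nonneg fun k _ => abs_nonneg _
      have h3 : (∑ k, |B' i k|) * ‖w'‖ ≤ (∑ k, |B' i k|) * (M' * K₁ * s) := by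
        apply mul_le_mul_of_nonneg_left _ h2
        calc ‖w'‖ ≤ M' * (K₁ * s) := hw'norm
          _ = M' * K₁ * s := by ring
      have h4 : M' * K₁ * s ≤ S := by rw [hS]; linarith
      nlinarith
    have hLle : ∀ j : ι, β j < 0 → Q j ≤ R := by
      intro j hjn
      have h1 : -(s + |B' j ⬝ᵥ w'|) ≤ d j - B' j ⬝ᵥ w' := by
        have := hds j; have := le_abs_self (B' j ⬝ᵥ w'); linarith
      have h2 := div_ub_neg hjn h1
      have h3 := hcbd j
      have h4 : (s + |B' j ⬝ᵥ w'|) * |β j|⁻¹ ≤ (1 + ∑ k, |B' j k|) * S * |β j|⁻¹ :=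
        mul_le_mul_of_nonneg_right h3 (by positivity)
      have h5 : (1 + ∑ k, |B' j k|) * S * |β j|⁻¹ ≤ K₂ * S := by
        have := hK₂i j
        have h6 : (1 + ∑ k, |B' j k|) * S * |β j|⁻¹ = ((1 + ∑ k, |B' j k|) * |β j|⁻¹) * S := by ring
        rw [h6]
        exact mul_le_mul_of_nonneg_right this hS0
      simp only [hQ, hR]; linarith
    have hUge : ∀ i : ι, 0 < β i → -R ≤ Q i := by
      intro i hip
      have h1 : -(s + |B' i ⬝ᵥ w'|) ≤ d i - B' i ⬝ᵥ w' := by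
        have := hds i; have := le_abs_self (B' i ⬝ᵥ w'); linarith
      have h2 := div_lb_pos hip h1
      have h3 := hcbd i
      have h4 : (s + |B' i ⬝ᵥ w'|) * |β i|⁻¹ ≤ (1 + ∑ k, |B' i k|) * S * |β i|⁻¹ :=
        mul_le_mul_of_nonneg_right h3 (by positivity)
      have h5 : (1 + ∑ k, |B' i k|) * S * |β i|⁻¹ ≤ K₂ * S := by
        have := hK₂i i
        have h6 : (1 + ∑ k, |B' i k|) * S * |β i|⁻¹ = ((1 + ∑ k, |B' i k|) * |β i|⁻¹) * S := by ring
        rw [h6]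
        exact mul_le_mul_of_nonneg_right this hS0
      simp only [hQ, hR]; linarith
    -- for every positive-negative pair the lower limit is below the upper limit
    have hLU : ∀ i : ι, 0 < β i → ∀ j : ι, β j < 0 → Q j ≤ Q i := by
      intro i hip j hjn
      have hx := hw'feas (.inr (⟨i, hip⟩, ⟨j, hjn⟩))
      have hx2 : (B' i ⬝ᵥ w') / β i - (B' j ⬝ᵥ w') / β j ≤ d i / β i - d j / β j := by
        have := hx
        show _ ≤ _
        rw [show C (.inr (⟨i, hip⟩, ⟨j, hjn⟩)) = fun k => B' i k / β i - B' j k / β j from rfl,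
          dot_div_sub] at this
        exact this
      simp only [hQ]
      rw [sub_div, sub_div]
      linarith
    -- choose the last coordinate
    have ht : ∃ t : ℝ, |t| ≤ R ∧ (∀ i : ι, 0 < β i → t ≤ Q i) ∧ (∀ j : ι, β j < 0 → Q j ≤ t) := by
      classical
      set Pset : Finset ι := Finset.univ.filter (fun i => 0 < β i) with hPset
      set Nset : Finset ι := Finset.univ.filter (fun j => β j < 0) with hNset
      by_cases hN : Nset.Nonempty <;> by_cases hP : Pset.Nonempty
      · refine ⟨max (Nset.sup' hN Q) (min (Pset.inf' hP Q) 0), ?_, ?_, ?_⟩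
        · rw [abs_le]
          constructor
          · have h1 : -R ≤ Pset.inf' hP Q :=
              Finset.le_inf' hP Q fun i hi => hUge i (by simpa [hPset] using hi)
            have : -R ≤ min (Pset.inf' hP Q) 0 := le_min h1 (by linarith)
            exact this.trans (le_max_right _ _)
          · apply max_le
            · exact Finset.sup'_le hN Q fun j hj => hLle j (by simpa [hNset] using hj)
            · exact (min_le_right _ _).trans hR0
        · intro i hip
          apply max_le
          · exact Finset.sup'_le hN Q fun j hj => hLU i hip j (by simpa [hNset] using hj)
          · exact (min_le_left _ _).trans (Finset.inf'_le Q (by simp [hPset, hip]))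
        · intro j hjn
          exact (Finset.le_sup' Q (by simp [hNset, hjn])).trans (le_max_left _ _)
      · refine ⟨max (Nset.sup' hN Q) 0, ?_, ?_, ?_⟩
        · rw [abs_le]
          refine ⟨by linarith [le_max_right (Nset.sup' hN Q) (0:ℝ)], max_le ?_ hR0⟩
          exact Finset.sup'_le hN Q fun j hj => hLle j (by simpa [hNset] using hj)
        · intro i hip
          exact absurd ⟨i, by simp [hPset, hip]⟩ hP
        · intro j hjn
          exact (Finset.le_sup' Q (by simp [hNset, hjn])).trans (le_max_left _ _)
      · refine ⟨min (Pset.inf' hP Q) 0, ?_, ?_, ?_⟩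
        · rw [abs_le]
          constructor
          · refine le_min ?_ (by linarith)
            exact Finset.le_inf' hP Q fun i hi => hUge i (by simpa [hPset] using hi)
          · exact (min_le_right _ _).trans hR0
        · intro i hip
          exact (min_le_left _ _).trans (Finset.inf'_le Q (by simp [hPset, hip]))
        · intro j hjn
          exact absurd ⟨j, by simp [hNset, hjn]⟩ hN
      · refine ⟨0, by simpa using hR0, fun i hip => absurd ⟨i, by simp [hPset, hip]⟩ hP,
          fun j hjn => absurd ⟨j, by simp [hNset, hjn]⟩ hN⟩
    obtain ⟨t, htR, htU, htL⟩ := ht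
    refine ⟨Fin.snoc w' t, fun i => ?_, fun k => ?_⟩
    · rw [hsplit i (Fin.snoc w' t)]
      have hcast : (fun k : Fin p => (Fin.snoc w' t : Fin (p+1) → ℝ) k.castSucc) = w' := by
        funext k; simp
      rw [hcast, Fin.snoc_last]
      rcases lt_trichotomy (β i) 0 with hin | hi0 | hip
      · have h1 := htL i hin
        simp only [hQ] at h1
        have h2 : (d i - B' i ⬝ᵥ w') / β i * β i = d i - B' i ⬝ᵥ w' := div_mul_cancel₀ _ hin.ne
        nlinarith
      · have h1 := hw'feas (.inl ⟨i, hi0⟩)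
        have h2 : C (.inl ⟨i, hi0⟩) = B' i := rfl
        rw [h2] at h1
        have h3 : d' (.inl ⟨i, hi0⟩) = d i := rfl
        rw [h3] at h1
        rw [hi0]; linarith
      · have h1 := htU i hip
        simp only [hQ] at h1
        have h2 : (d i - B' i ⬝ᵥ w') / β i * β i = d i - B' i ⬝ᵥ w' := div_mul_cancel₀ _ hip.ne'
        nlinarith
    · induction k using Fin.lastCases with
      | last =>
        rw [Fin.snoc_last]
        have h1 : R = K₂ * (1 + M' * K₁) * s := by rw [hR, hS]; ring
        rw [h1] at htR
        nlinarith [abs_nonneg t, htR]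
      | cast j =>
        rw [Fin.snoc_castSucc]
        have h1 := hw'bd j
        have h2 : M' * (K₁ * s) ≤ (M' * K₁ + K₂ * (1 + M' * K₁)) * s := by nlinarith
        linarith


-- L1: coercivity of PosDef quadratic form
lemma posdef_coercive {p : ℕ} {H : Matrix (Fin p) (Fin p) ℝ} (hH : H.PosDef) :
    ∃ m : ℝ, 0 < m ∧ ∀ v : Fin p → ℝ, m * ‖v‖ ^ 2 ≤ v ⬝ᵥ H.mulVec v := by
  rcases Nat.eq_zero_or_pos p with hp | hp
  · refine ⟨1, one_pos, fun v => ?_⟩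
    subst hp
    have hv : v = 0 := Subsingleton.elim v 0
    rw [hv, norm_zero]
    simp
  · haveI : Nontrivial (Fin p → ℝ) := by
      refine ⟨0, Function.const _ 1, fun hcontra => ?_⟩
      have := congrFun hcontra ⟨0, hp⟩
      simpa using this
    have hcont : Continuous fun v : Fin p → ℝ => v ⬝ᵥ H.mulVec v := by continuity
    have hne : (Metric.sphere (0 : Fin p → ℝ) 1).Nonempty :=
      NormedSpace.sphere_nonempty.2 zero_le_one
    have hcpt : IsCompact (Metric.sphere (0 : Fin p → ℝ) 1) := isCompact_sphere _ _
    obtain ⟨u, hu, hmin⟩ := hcpt.exists_isMinOn hne (hcont.continuousOn)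
    have hu1 : ‖u‖ = 1 := by simpa using hu
    have hune : u ≠ 0 := by intro h0; rw [h0] at hu1; simp at hu1
    refine ⟨u ⬝ᵥ H.mulVec u, hH.dotProduct_mulVec_pos hune, fun v => ?_⟩
    rcases eq_or_ne v 0 with rfl | hv
    · simp
    · have hnv : (0:ℝ) < ‖v‖ := norm_pos_iff.2 hv
      set w : Fin p → ℝ := ‖v‖⁻¹ • v with hw
      have hwsph : w ∈ Metric.sphere (0 : Fin p → ℝ) 1 := by
        simp [hw, norm_smul, abs_of_pos (inv_pos.2 hnv), inv_mul_cancel₀ hnv.ne']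
      have h1 : u ⬝ᵥ H.mulVec u ≤ w ⬝ᵥ H.mulVec w := hmin hwsph
      have h2 : w ⬝ᵥ H.mulVec w = (‖v‖⁻¹)^2 * (v ⬝ᵥ H.mulVec v) := by
        simp [hw, mulVec_smul, smul_dotProduct, dotProduct_smul, smul_eq_mul]
        ring
      have h3 := mul_le_mul_of_nonneg_left (h1.trans_eq h2) (le_of_lt (pow_pos hnv 2))
      calc (u ⬝ᵥ H.mulVec u) * ‖v‖^2 ≤ ‖v‖^2 * ((‖v‖⁻¹)^2 * (v ⬝ᵥ H.mulVec v)) := by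
            linarith
        _ = v ⬝ᵥ H.mulVec v := by field_simp

lemma dot_abs_le' {n : ℕ} (u v : Fin n → ℝ) : |u ⬝ᵥ v| ≤ (n:ℝ) * ‖u‖ * ‖v‖ := by
  refine (dot_abs_le u v).trans ?_
  have h1 : ∑ k, |u k| ≤ (n:ℝ) * ‖u‖ := by
    calc ∑ k, |u k| ≤ ∑ _k : Fin n, ‖u‖ := Finset.sum_le_sum fun k _ => abs_le_pinorm u k
      _ = (n:ℝ) * ‖u‖ := by simp [mul_comm]
  exact mul_le_mul_of_nonneg_right h1 (norm_nonneg v)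

lemma mulVec_norm_le {p : ℕ} (H : Matrix (Fin p) (Fin p) ℝ) (y : Fin p → ℝ) :
    ‖H.mulVec y‖ ≤ (∑ i, ∑ j, |H i j|) * ‖y‖ := by
  refine pinorm_le (by positivity) fun i => ?_
  have h1 : |H i ⬝ᵥ y| ≤ (∑ j, |H i j|) * ‖y‖ := dot_abs_le _ _
  have h2 : (∑ j, |H i j|) ≤ ∑ i, ∑ j, |H i j| :=
    Finset.single_le_sum (f := fun i => ∑ j, |H i j|)
      (fun i _ => Finset.sum_nonneg fun j _ => abs_nonneg _) (Finset.mem_univ i)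
  have : |H i ⬝ᵥ y| ≤ (∑ i, ∑ j, |H i j|) * ‖y‖ :=
    h1.trans (mul_le_mul_of_nonneg_right h2 (norm_nonneg y))
  simpa [Matrix.mulVec, dotProduct] using this

/-- The quadratic objective function. -/
noncomputable def qf {p : ℕ} (H : Matrix (Fin p) (Fin p) ℝ) (h : Fin p → ℝ) (g : Fin p → ℝ) : ℝ :=
  (1/2) * (g ⬝ᵥ H.mulVec g) + h ⬝ᵥ g

lemma dot_symm {p : ℕ} {H : Matrix (Fin p) (Fin p) ℝ} (hsym : Hᵀ = H) (x d : Fin p → ℝ) :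
    d ⬝ᵥ H.mulVec x = x ⬝ᵥ H.mulVec d := by
  rw [dotProduct_mulVec, ← mulVec_transpose, hsym, dotProduct_comm]

lemma qf_expand {p : ℕ} {H : Matrix (Fin p) (Fin p) ℝ} (hsym : Hᵀ = H) (h x d : Fin p → ℝ) :
    qf H h (x + d) = qf H h x + (H.mulVec x + h) ⬝ᵥ d + (1/2) * (d ⬝ᵥ H.mulVec d) := by
  simp only [qf, mulVec_add, dotProduct_add, add_dotProduct]
  have e : (H.mulVec x) ⬝ᵥ d = x ⬝ᵥ H.mulVec d := by
    rw [dotProduct_comm]; exact dot_symm hsym x d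
  rw [e, dot_symm hsym x d]; ring

lemma smul_quad {p : ℕ} (H : Matrix (Fin p) (Fin p) ℝ) (d : Fin p → ℝ) (t : ℝ) :
    (t • d) ⬝ᵥ H.mulVec (t • d) = t^2 * (d ⬝ᵥ H.mulVec d) := by
  rw [mulVec_smul, smul_dotProduct, dotProduct_smul]
  simp [smul_eq_mul]; ring

/-- Variational inequality + strong convexity at a constrained minimizer. -/
lemma variational {p q' : ℕ} {H : Matrix (Fin p) (Fin p) ℝ} (hsym : Hᵀ = H) {m : ℝ}
    (hcoer : ∀ v : Fin p → ℝ, m * ‖v‖^2 ≤ v ⬝ᵥ H.mulVec v) (h : Fin p → ℝ)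
    {A : Matrix (Fin q') (Fin p) ℝ} {rhs : Fin q' → ℝ} {x : Fin p → ℝ}
    (hxf : A.mulVec x ≤ rhs)
    (hxopt : ∀ g : Fin p → ℝ, A.mulVec g ≤ rhs → qf H h x ≤ qf H h g)
    {z : Fin p → ℝ} (hzf : A.mulVec z ≤ rhs) :
    qf H h x + (m/2) * ‖z - x‖^2 ≤ qf H h z := by
  set d : Fin p → ℝ := z - x with hd
  set c : ℝ := (H.mulVec x + h) ⬝ᵥ d with hc
  set a : ℝ := (1/2) * (d ⬝ᵥ H.mulVec d) with ha
  -- feasibility along the segment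
  have hseg : ∀ t : ℝ, 0 ≤ t → t ≤ 1 → A.mulVec (x + t • d) ≤ rhs := by
    intro t ht0 ht1
    intro i
    have h1 : (A.mulVec (x + t • d)) i
        = (A.mulVec x) i + t * ((A.mulVec z) i - (A.mulVec x) i) := by
      simp only [hd, mulVec_add, mulVec_smul, mulVec_sub, Pi.add_apply, Pi.smul_apply,
        Pi.sub_apply, smul_eq_mul]
      try ring
    rw [h1]
    have h2 := hxf i
    have h3 := hzf i
    nlinarith
  -- the directional derivative is nonnegative
  have hgrad : 0 ≤ c := by
    by_contra hcneg
    push_neg at hcneg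
    set t : ℝ := min 1 ((-c) / (2 * (|a| + 1))) with htdef
    have ht0 : 0 < t := by
      apply lt_min one_pos
      apply div_pos (by linarith) (by positivity)
    have ht1 : t ≤ 1 := min_le_left _ _
    have hfeas := hseg t ht0.le ht1
    have hval := hxopt _ hfeas
    rw [qf_expand hsym h x (t • d)] at hval
    have hdot : (H.mulVec x + h) ⬝ᵥ (t • d) = t * c := by
      rw [hc, dotProduct_smul]; simp [smul_eq_mul]
    rw [hdot, smul_quad] at hval
    -- hval : qf ≤ qf + t*c + (1/2)*(t^2 * (d ⬝ᵥ H d))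
    have h4 : 0 ≤ t * c + t^2 * ((1/2) * (d ⬝ᵥ H.mulVec d)) := by nlinarith [hval]
    have h5 : t ≤ (-c) / (2 * (|a| + 1)) := min_le_right _ _
    have h6 : t * (2 * (|a| + 1)) ≤ -c := by
      rw [div_eq_mul_inv] at h5
      have := mul_le_mul_of_nonneg_right h5 (le_of_lt (by positivity : (0:ℝ) < 2 * (|a| + 1)))
      calc t * (2 * (|a| + 1)) ≤ (-c) * (2 * (|a| + 1))⁻¹ * (2 * (|a| + 1)) := this
        _ = -c := by field_simp
    have h7 : t^2 * ((1/2) * (d ⬝ᵥ H.mulVec d)) = t * (t * a) := by rw [ha]; ring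
    have h8 : t * a ≤ t * |a| := mul_le_mul_of_nonneg_left (le_abs_self a) ht0.le
    have h9 : t * |a| ≤ (-c)/2 := by nlinarith [abs_nonneg a]
    nlinarith
  -- strong convexity conclusion
  have hz : z = x + d := by rw [hd]; ring
  rw [hz, qf_expand hsym h x d]
  have h10 := hcoer d
  have : ‖z - x‖ = ‖d‖ := by rw [hd]
  rw [this]
  nlinarith

lemma qf_expand_bound {p : ℕ} {H : Matrix (Fin p) (Fin p) ℝ} (hsym : Hᵀ = H)
    (h x w : Fin p → ℝ) :
    qf H h (x + w) ≤ qf H h x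
      + ((p:ℝ) * ((∑ i, ∑ j, |H i j|) * ‖x‖ + ‖h‖)) * ‖w‖
      + (1/2) * (p:ℝ) * (∑ i, ∑ j, |H i j|) * ‖w‖^2 := by
  set SH : ℝ := ∑ i, ∑ j, |H i j| with hSH
  have hSH0 : 0 ≤ SH := by positivity
  rw [qf_expand hsym h x w]
  have h1 : (H.mulVec x + h) ⬝ᵥ w ≤ (p:ℝ) * (SH * ‖x‖ + ‖h‖) * ‖w‖ := by
    have ha := (dot_abs_le' (H.mulVec x + h) w)
    have hb : ‖H.mulVec x + h‖ ≤ SH * ‖x‖ + ‖h‖ :=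
      (norm_add_le _ _).trans (by linarith [mulVec_norm_le H x])
    have hc : (p:ℝ) * ‖H.mulVec x + h‖ * ‖w‖ ≤ (p:ℝ) * (SH * ‖x‖ + ‖h‖) * ‖w‖ := by
      have := mul_le_mul_of_nonneg_left hb (by positivity : (0:ℝ) ≤ (p:ℝ))
      exact mul_le_mul_of_nonneg_right this (norm_nonneg w)
    linarith [le_abs_self ((H.mulVec x + h) ⬝ᵥ w)]
  have h2 : w ⬝ᵥ H.mulVec w ≤ (p:ℝ) * SH * ‖w‖^2 := by
    have ha := dot_abs_le' w (H.mulVec w)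
    have hb : (p:ℝ) * ‖w‖ * ‖H.mulVec w‖ ≤ (p:ℝ) * ‖w‖ * (SH * ‖w‖) :=
      mul_le_mul_of_nonneg_left (mulVec_norm_le H w) (by positivity)
    have hc : (p:ℝ) * ‖w‖ * (SH * ‖w‖) = (p:ℝ) * SH * ‖w‖^2 := by ring
    linarith [le_abs_self (w ⬝ᵥ H.mulVec w)]
  linarith

lemma qf_abs_bound {p : ℕ} (H : Matrix (Fin p) (Fin p) ℝ) (h y : Fin p → ℝ) :
    qf H h y ≤ (1/2) * (p:ℝ) * (∑ i, ∑ j, |H i j|) * ‖y‖^2 + (p:ℝ) * ‖h‖ * ‖y‖ := by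
  set SH : ℝ := ∑ i, ∑ j, |H i j| with hSH
  have h2 : y ⬝ᵥ H.mulVec y ≤ (p:ℝ) * SH * ‖y‖^2 := by
    have ha := dot_abs_le' y (H.mulVec y)
    have hb : (p:ℝ) * ‖y‖ * ‖H.mulVec y‖ ≤ (p:ℝ) * ‖y‖ * (SH * ‖y‖) :=
      mul_le_mul_of_nonneg_left (mulVec_norm_le H y) (by positivity)
    have hc : (p:ℝ) * ‖y‖ * (SH * ‖y‖) = (p:ℝ) * SH * ‖y‖^2 := by ring
    linarith [le_abs_self (y ⬝ᵥ H.mulVec y)]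
  have h3 : h ⬝ᵥ y ≤ (p:ℝ) * ‖h‖ * ‖y‖ := by
    have := dot_abs_le' h y
    linarith [le_abs_self (h ⬝ᵥ y)]
  rw [qf]; linarith

lemma qf_coercive_bound {p : ℕ} {H : Matrix (Fin p) (Fin p) ℝ} {m : ℝ}
    (hcoer : ∀ v : Fin p → ℝ, m * ‖v‖^2 ≤ v ⬝ᵥ H.mulVec v) (h g : Fin p → ℝ) :
    (m/2) * ‖g‖^2 - (p:ℝ) * ‖h‖ * ‖g‖ ≤ qf H h g := by
  have h1 := hcoer g
  have h2 : -((p:ℝ) * ‖h‖ * ‖g‖) ≤ h ⬝ᵥ g := by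
    have := dot_abs_le' h g
    linarith [neg_abs_le (h ⬝ᵥ g)]
  rw [qf]; linarith

set_option maxHeartbeats 1000000 in
/-- continuity part of Theorem 1, multiparametric quadratic
programming: for `H` symmetric positive definite, if `g*(θ)` denotes the unique
minimizer of `½ gᵀ H g + hᵀ g` over `{g : A g ≤ b + E θ}`, then `θ ↦ g*(θ)` is
continuous on the feasible parameter set `Θ = {θ : ∃ g, A g ≤ b + E θ}`. -/
theorem mpQP_minimizer_continuousOn {p q r : ℕ}
    (H : Matrix (Fin p) (Fin p) ℝ) (hH : H.PosDef) (h : Fin p → ℝ)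
    (A : Matrix (Fin q) (Fin p) ℝ) (E : Matrix (Fin q) (Fin r) ℝ) (b : Fin q → ℝ)
    (gstar : (Fin r → ℝ) → (Fin p → ℝ))
    (hgstar : ∀ θ : Fin r → ℝ, (∃ g : Fin p → ℝ, A.mulVec g ≤ b + E.mulVec θ) →
      A.mulVec (gstar θ) ≤ b + E.mulVec θ ∧
        ∀ g : Fin p → ℝ, A.mulVec g ≤ b + E.mulVec θ →
          (1 / 2) * (gstar θ ⬝ᵥ H.mulVec (gstar θ)) + h ⬝ᵥ gstar θ ≤
            (1 / 2) * (g ⬝ᵥ H.mulVec g) + h ⬝ᵥ g) :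
    ContinuousOn gstar
      {θ : Fin r → ℝ | ∃ g : Fin p → ℝ, A.mulVec g ≤ b + E.mulVec θ} := by
  classical
  obtain ⟨m, hm, hcoer⟩ := posdef_coercive hH
  have hsym : Hᵀ = H := by
    have := hH.1
    simpa [Matrix.IsHermitian] using this
  obtain ⟨M, hM0, hMspec⟩ := hoffman0 p (Fin q) (fun i => A i)
  set CE : ℝ := ∑ i, ∑ j, |E i j| with hCE
  have hCE0 : 0 ≤ CE := by positivity
  set c : ℝ := M * CE with hcdef
  have hc0 : 0 ≤ c := mul_nonneg hM0 hCE0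
  have hp0 : (0:ℝ) ≤ (p:ℝ) := Nat.cast_nonneg p
  set SH : ℝ := ∑ i, ∑ j, |H i j| with hSH
  have hSH0 : 0 ≤ SH := by positivity
  clear_value CE c SH
  -- selection of nearby feasible points (Hoffman bound)
  have sel : ∀ (θ θ' : Fin r → ℝ) (x : Fin p → ℝ), A.mulVec x ≤ b + E.mulVec θ →
      (∃ g : Fin p → ℝ, A.mulVec g ≤ b + E.mulVec θ') →
      ∃ y : Fin p → ℝ, A.mulVec y ≤ b + E.mulVec θ' ∧ ‖y - x‖ ≤ c * ‖θ' - θ‖ := by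
    rintro θ θ' x hx ⟨g', hg'⟩
    set s : ℝ := CE * ‖θ' - θ‖ with hsdef
    have hs0 : 0 ≤ s := mul_nonneg hCE0 (norm_nonneg _)
    clear_value s
    have hdlb : ∀ i, -s ≤ ((b + E.mulVec θ') i - (A.mulVec x) i) := by
      intro i
      have h1 : 0 ≤ (b + E.mulVec θ) i - (A.mulVec x) i := sub_nonneg.2 (hx i)
      have h2 : (b + E.mulVec θ') i - (A.mulVec x) i
          = ((b + E.mulVec θ) i - (A.mulVec x) i) + (E.mulVec (θ' - θ)) i := by
        simp only [mulVec_sub, Pi.add_apply, Pi.sub_apply]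
        ring
      have h3 : |(E.mulVec (θ' - θ)) i| ≤ s := by
        have ha : |(fun j => E i j) ⬝ᵥ (θ' - θ)| ≤ (∑ j, |E i j|) * ‖θ' - θ‖ :=
          dot_abs_le _ _
        have hrow : (∑ j, |E i j|) ≤ CE := by
          rw [hCE]
          exact Finset.single_le_sum (f := fun i => ∑ j, |E i j|)
            (fun i _ => Finset.sum_nonneg fun j _ => abs_nonneg _) (Finset.mem_univ i)
        have hb : (∑ j, |E i j|) * ‖θ' - θ‖ ≤ CE * ‖θ' - θ‖ :=
          mul_le_mul_of_nonneg_right hrow (norm_nonneg _)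
        rw [hsdef]
        exact ha.trans hb
      rw [h2]
      have := neg_abs_le ((E.mulVec (θ' - θ)) i)
      linarith
    have hfeas : ∃ w : Fin p → ℝ, ∀ i,
        (fun i => A i) i ⬝ᵥ w ≤ ((b + E.mulVec θ') i - (A.mulVec x) i) := by
      refine ⟨g' - x, fun i => ?_⟩
      have h1 : A i ⬝ᵥ (g' - x) = (A.mulVec g') i - (A.mulVec x) i := by
        simp [Matrix.mulVec, dotProduct_sub]
      have := hg' i
      simp only [h1]
      linarith [hg' i]
    obtain ⟨w, hwfeas, hwbd⟩ := hMspec _ s hs0 hdlb hfeas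
    refine ⟨x + w, fun i => ?_, ?_⟩
    · have h1 := hwfeas i
      have h2 : (A.mulVec (x + w)) i = (A.mulVec x) i + A i ⬝ᵥ w := by
        simp [mulVec_add, Matrix.mulVec]
      rw [h2]
      linarith
    · have h1 : ‖w‖ ≤ M * s := pinorm_le (mul_nonneg hM0 hs0) hwbd
      have h2 : x + w - x = w := by abel
      rw [h2]
      calc ‖w‖ ≤ M * s := h1
        _ = c * ‖θ' - θ‖ := by rw [hsdef, hcdef]; ring
  -- ε-δ continuity
  rw [Metric.continuousOn_iff]
  intro θb hθb ε hε
  obtain ⟨xbpfeas, xbopt⟩ := hgstar θb hθb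
  set xb : Fin p → ℝ := gstar θb with hxb
  clear_value xb
  set Y : ℝ := ‖xb‖ + c with hY
  set B₀ : ℝ := (1/2) * (p:ℝ) * SH * Y^2 + (p:ℝ) * ‖h‖ * Y with hB₀
  set RG : ℝ := (2 * ((p:ℝ) * ‖h‖ + |B₀|) + m) / m with hRG
  have hRGm : m * RG = 2 * ((p:ℝ) * ‖h‖ + |B₀|) + m := by
    rw [hRG]; field_simp
  have hRG1 : 1 ≤ RG := by
    rw [hRG, le_div_iff₀ hm]
    have : (0:ℝ) ≤ (p:ℝ) * ‖h‖ + |B₀| := by positivity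
    linarith
  have hRG0 : 0 ≤ RG := by linarith
  set K : ℝ := (p:ℝ) * (SH * ‖xb‖ + ‖h‖) * c + (p:ℝ) * (SH * RG + ‖h‖) * c
      + (p:ℝ) * SH * c^2 with hK
  have hpSH : (0:ℝ) ≤ (1/2) * (p:ℝ) * SH :=
    mul_nonneg (mul_nonneg (by norm_num) hp0) hSH0
  have hK0 : 0 ≤ K := by
    rw [hK]
    have h1 : (0:ℝ) ≤ SH * ‖xb‖ + ‖h‖ :=
      add_nonneg (mul_nonneg hSH0 (norm_nonneg _)) (norm_nonneg _)
    have h2 : (0:ℝ) ≤ SH * RG + ‖h‖ :=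
      add_nonneg (mul_nonneg hSH0 hRG0) (norm_nonneg _)
    have h3 := mul_nonneg (mul_nonneg hp0 h1) hc0
    have h4 := mul_nonneg (mul_nonneg hp0 h2) hc0
    have h5 := mul_nonneg (mul_nonneg hp0 hSH0) (sq_nonneg c)
    linarith
  clear_value Y B₀ RG K
  set δ : ℝ := min 1 (min (ε / (2 * (c + 1))) (m * ε^2 / (8 * (K + 1)))) with hδ
  have hδ0 : 0 < δ := by
    rw [hδ]
    apply lt_min one_pos
    apply lt_min
    · exact div_pos hε (by linarith)
    · exact div_pos (mul_pos hm (pow_pos hε 2)) (by linarith)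
  have hδ1 : δ ≤ 1 := by rw [hδ]; exact min_le_left _ _
  have hδ2 : δ ≤ ε / (2 * (c + 1)) := by
    rw [hδ]; exact (min_le_right _ _).trans (min_le_left _ _)
  have hδ3 : δ ≤ m * ε^2 / (8 * (K + 1)) := by
    rw [hδ]; exact (min_le_right _ _).trans (min_le_right _ _)
  clear_value δ
  refine ⟨δ, hδ0, fun θ hθ hdist => ?_⟩
  obtain ⟨gfeas, gopt⟩ := hgstar θ hθ
  set g : Fin p → ℝ := gstar θ with hg
  clear_value g
  have hdist' : ‖θ - θb‖ < δ := by rwa [← dist_eq_norm]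
  obtain ⟨y, hyf, hyb⟩ := sel θb θ xb xbpfeas hθ
  obtain ⟨z, hzf, hzb⟩ := sel θ θb g gfeas hθb
  have hyb' : ‖y - xb‖ ≤ c * δ :=
    hyb.trans (mul_le_mul_of_nonneg_left hdist'.le hc0)
  have hzb' : ‖z - g‖ ≤ c * δ := by
    refine hzb.trans ?_
    rw [norm_sub_rev]
    exact mul_le_mul_of_nonneg_left hdist'.le hc0
  have hcδ0 : 0 ≤ c * δ := mul_nonneg hc0 hδ0.le
  -- optimality inequalities
  have hfg_le : qf H h g ≤ qf H h y := gopt y hyf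
  have hstrong : qf H h xb + (m/2) * ‖z - xb‖^2 ≤ qf H h z :=
    variational hsym hcoer h xbpfeas (fun g' hg' => xbopt g' hg') hzf
  -- bound ‖y‖ and qf y
  have hyY : ‖y‖ ≤ Y := by
    have h1 : ‖y‖ ≤ ‖xb‖ + ‖y - xb‖ := by
      calc ‖y‖ = ‖xb + (y - xb)‖ := by rw [show xb + (y - xb) = y from by abel]
        _ ≤ ‖xb‖ + ‖y - xb‖ := norm_add_le _ _
    have h2 : c * δ ≤ c := by
      have := mul_le_mul_of_nonneg_left hδ1 hc0
      linarith only [this]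
    rw [hY]; linarith only [h1, h2, hyb']
  have hqfyB : qf H h y ≤ B₀ := by
    have h1 := qf_abs_bound H h y
    have h2 : ‖y‖^2 ≤ Y^2 := pow_le_pow_left₀ (norm_nonneg _) hyY 2
    have h3 : (1/2) * (p:ℝ) * SH * ‖y‖^2 ≤ (1/2) * (p:ℝ) * SH * Y^2 :=
      mul_le_mul_of_nonneg_left h2 hpSH
    have h4 : (p:ℝ) * ‖h‖ * ‖y‖ ≤ (p:ℝ) * ‖h‖ * Y := by
      apply mul_le_mul_of_nonneg_left hyY (by positivity)
    rw [hB₀]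
    calc qf H h y ≤ (1/2) * (p:ℝ) * SH * ‖y‖^2 + (p:ℝ) * ‖h‖ * ‖y‖ := by
          simpa [hSH] using h1
      _ ≤ (1/2) * (p:ℝ) * SH * Y^2 + (p:ℝ) * ‖h‖ * Y := add_le_add h3 h4
  -- a priori bound on ‖g‖
  have hgRG : ‖g‖ ≤ RG := by
    by_contra hgc
    push_neg at hgc
    have h1 := qf_coercive_bound hcoer h g
    have h2 : qf H h g ≤ B₀ := hfg_le.trans hqfyB
    have h3 : (m/2) * ‖g‖^2 ≤ B₀ + (p:ℝ) * ‖h‖ * ‖g‖ := by linarith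
    have hx1 : (1:ℝ) ≤ ‖g‖ := hRG1.trans hgc.le
    have hB₀abs : B₀ ≤ |B₀| := le_abs_self B₀
    have hx0 : (0:ℝ) < ‖g‖ := lt_of_lt_of_le one_pos hx1
    have k0 : 2 * ((p:ℝ) * ‖h‖ + |B₀|) + m < m * ‖g‖ := by
      have := mul_lt_mul_of_pos_left hgc hm
      linarith only [this, hRGm]
    have k1 : (2 * ((p:ℝ) * ‖h‖ + |B₀|) + m) * ‖g‖ < m * ‖g‖ * ‖g‖ :=
      mul_lt_mul_of_pos_right k0 hx0
    have k2 : |B₀| * 1 ≤ |B₀| * ‖g‖ := mul_le_mul_of_nonneg_left hx1 (abs_nonneg B₀)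
    have k3 : m * 1 ≤ m * ‖g‖ := mul_le_mul_of_nonneg_left hx1 hm.le
    have hsq : m * ‖g‖ * ‖g‖ = m * ‖g‖^2 := by ring
    rw [hsq] at k1
    linarith only [k1, k2, k3, h3, hB₀abs, hm]
  -- expansion bounds
  have e1 : qf H h y ≤ qf H h xb + (p:ℝ) * (SH * ‖xb‖ + ‖h‖) * (c * δ)
      + (1/2) * (p:ℝ) * SH * (c * δ)^2 := by
    have h1 := qf_expand_bound hsym h xb (y - xb)
    have h2 : xb + (y - xb) = y := by abel
    rw [h2] at h1
    have h3 : ‖y - xb‖^2 ≤ (c * δ)^2 := pow_le_pow_left₀ (norm_nonneg _) hyb' 2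
    have h4 : (p:ℝ) * (SH * ‖xb‖ + ‖h‖) * ‖y - xb‖ ≤ (p:ℝ) * (SH * ‖xb‖ + ‖h‖) * (c * δ) :=
      mul_le_mul_of_nonneg_left hyb' (mul_nonneg hp0
        (add_nonneg (mul_nonneg hSH0 (norm_nonneg _)) (norm_nonneg _)))
    have h5 : (1/2) * (p:ℝ) * SH * ‖y - xb‖^2 ≤ (1/2) * (p:ℝ) * SH * (c * δ)^2 :=
      mul_le_mul_of_nonneg_left h3 hpSH
    calc qf H h y ≤ qf H h xb + (p:ℝ) * (SH * ‖xb‖ + ‖h‖) * ‖y - xb‖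
          + (1/2) * (p:ℝ) * SH * ‖y - xb‖^2 := by simpa [hSH] using h1
      _ ≤ _ := by linarith
  have e2 : qf H h z ≤ qf H h g + (p:ℝ) * (SH * RG + ‖h‖) * (c * δ)
      + (1/2) * (p:ℝ) * SH * (c * δ)^2 := by
    have h1 := qf_expand_bound hsym h g (z - g)
    have h2 : g + (z - g) = z := by abel
    rw [h2] at h1
    have h3 : ‖z - g‖^2 ≤ (c * δ)^2 := pow_le_pow_left₀ (norm_nonneg _) hzb' 2
    have h40 : (p:ℝ) * (SH * ‖g‖ + ‖h‖) ≤ (p:ℝ) * (SH * RG + ‖h‖) := by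
      have := mul_le_mul_of_nonneg_left hgRG hSH0
      have hp0 : (0:ℝ) ≤ (p:ℝ) := by positivity
      nlinarith
    have h4 : (p:ℝ) * (SH * ‖g‖ + ‖h‖) * ‖z - g‖ ≤ (p:ℝ) * (SH * RG + ‖h‖) * (c * δ) := by
      apply mul_le_mul h40 hzb' (norm_nonneg _)
        (mul_nonneg hp0 (add_nonneg (mul_nonneg hSH0 hRG0) (norm_nonneg _)))
    have h5 : (1/2) * (p:ℝ) * SH * ‖z - g‖^2 ≤ (1/2) * (p:ℝ) * SH * (c * δ)^2 :=
      mul_le_mul_of_nonneg_left h3 hpSH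
    calc qf H h z ≤ qf H h g + (p:ℝ) * (SH * ‖g‖ + ‖h‖) * ‖z - g‖
          + (1/2) * (p:ℝ) * SH * ‖z - g‖^2 := by simpa [hSH] using h1
      _ ≤ _ := by linarith
  -- combine
  have hmain : (m/2) * ‖z - xb‖^2 ≤ K * δ := by
    have h1 : (m/2) * ‖z - xb‖^2 ≤ qf H h z - qf H h xb := by linarith only [hstrong]
    have h2 : qf H h z - qf H h xb
        ≤ (p:ℝ) * (SH * ‖xb‖ + ‖h‖) * (c * δ) + (p:ℝ) * (SH * RG + ‖h‖) * (c * δ)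
          + 2 * ((1/2) * (p:ℝ) * SH * (c * δ)^2) := by linarith only [e1, e2, hfg_le]
    have h3 : (c * δ)^2 ≤ c^2 * δ := by nlinarith only [hc0, hδ0, hδ1, sq_nonneg c]
    have h4 : (p:ℝ) * SH * (c * δ)^2 ≤ (p:ℝ) * SH * (c^2 * δ) :=
      mul_le_mul_of_nonneg_left h3 (mul_nonneg hp0 hSH0)
    rw [hK]
    linarith only [h1, h2, h4]
  have hzxb : ‖z - xb‖ < ε / 2 := by
    have h1 : K * δ < m * ε^2 / 8 := by
      have h2 : K * δ ≤ K * (m * ε^2 / (8 * (K + 1))) :=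
        mul_le_mul_of_nonneg_left hδ3 hK0
      have h3 : K * (m * ε^2 / (8 * (K + 1))) < m * ε^2 / 8 := by
        rw [← mul_div_assoc, div_lt_div_iff₀ (by linarith) (by norm_num)]
        nlinarith only [mul_pos hm (pow_pos hε 2), hK0]
      linarith only [h2, h3]
    have hn2 : ‖z - xb‖^2 < ε^2/4 := by
      have hmn : (m/2) * ‖z - xb‖^2 < m * ε^2 / 8 := hmain.trans_lt h1
      nlinarith only [hmn, hm]
    nlinarith only [hn2, norm_nonneg (z - xb), hε]
  have hcδε : c * δ < ε / 2 := by
    have h1 : c * δ ≤ c * (ε / (2 * (c + 1))) := mul_le_mul_of_nonneg_left hδ2 hc0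
    have h2 : c * (ε / (2 * (c + 1))) < ε / 2 := by
      rw [← mul_div_assoc, div_lt_div_iff₀ (by linarith) (by norm_num)]
      nlinarith only [hε, hc0]
    linarith only [h1, h2]
  have htri : dist g xb ≤ ‖g - z‖ + ‖z - xb‖ := by
    rw [dist_eq_norm]
    calc ‖g - xb‖ = ‖(g - z) + (z - xb)‖ := by rw [show (g - z) + (z - xb) = g - xb from by abel]
      _ ≤ ‖g - z‖ + ‖z - xb‖ := norm_add_le _ _
  have hgz : ‖g - z‖ ≤ c * δ := by rw [norm_sub_rev]; exact hzb'
  show dist g xb < ε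
  calc dist g xb ≤ ‖g - z‖ + ‖z - xb‖ := htri
    _ < c * δ + ε / 2 := by linarith only [hzxb, hgz]
    _ < ε := by linarith only [hcδε]
end

section
/- Let H ∈ ℝ^{p×p} be a symmetric positive definite matrix, h ∈ ℝ^p, A ∈ ℝ^{q×p}, E ∈ ℝ^{q×r}, and b ∈ ℝ^q. Suppose the feasible parameter set Θ = {θ ∈ ℝ^r : ∃ g ∈ ℝ^p, A g ≤ b + E θ} is nonempty and compact, and for θ ∈ Θ let g*(θ) denote the unique minimizer of (1/2)gᵀHg + hᵀg over {g : A g ≤ b + E θ}. Then there exist finitely many closed convex polytopes Θ₁, …, Θ_M ⊆ ℝ^r (each a finite intersection of closed half-spaces), matrices C₁, …, C_M ∈ ℝ^{p×r}, and vectors c₁, …, c_M ∈ ℝ^p such that Θ = Θ₁ ∪ ⋯ ∪ Θ_M and for every k and every θ ∈ Θ_k, g*(θ) = C_k θ + c_k. -/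
open Matrix Finset

namespace MpQPAux
variable {p q r : ℕ}


lemma cone_step {ι V : Type*} [DecidableEq ι] [AddCommGroup V] [Module ℝ V]
    (a : ι → V) (s : Finset ι) (c : ι → ℝ)
    (hcsum : ∑ i ∈ s, c i • a i = 0) (hcpos : ∃ i ∈ s, 0 < c i)
    (l : ι → ℝ) (hl : ∀ i ∈ s, 0 ≤ l i) :
    ∃ i₀ ∈ s, ∃ l' : ι → ℝ, (∀ i ∈ s.erase i₀, 0 ≤ l' i) ∧
      ∑ i ∈ s.erase i₀, l' i • a i = ∑ i ∈ s, l i • a i := by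
  classical
  obtain ⟨j, hjs, hjc⟩ := hcpos
  have hTne : (s.filter (fun i => 0 < c i)).Nonempty := ⟨j, by simp [hjs, hjc]⟩
  obtain ⟨i₀, hi₀T, hi₀min⟩ := Finset.exists_min_image _ (fun i => l i / c i) hTne
  have hi₀s : i₀ ∈ s := (Finset.mem_filter.1 hi₀T).1
  have hci₀ : 0 < c i₀ := (Finset.mem_filter.1 hi₀T).2
  set τ := l i₀ / c i₀ with hτ
  have hτ0 : 0 ≤ τ := div_nonneg (hl _ hi₀s) hci₀.le
  refine ⟨i₀, hi₀s, fun i => l i - τ * c i, ?_, ?_⟩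
  · intro i hi
    dsimp only
    have his : i ∈ s := Finset.mem_of_mem_erase hi
    by_cases hci : 0 < c i
    · have hiT : i ∈ s.filter (fun i => 0 < c i) := Finset.mem_filter.2 ⟨his, hci⟩
      have hmin := hi₀min i hiT
      have h2 : τ * c i ≤ l i := by
        rw [hτ, div_mul_eq_mul_div, div_le_iff₀ hci₀]
        rw [hτ, div_le_div_iff₀ hci₀ hci] at hmin
        linarith
      linarith
    · have : τ * c i ≤ 0 := mul_nonpos_of_nonneg_of_nonpos hτ0 (not_lt.1 hci)
      have := hl i his
      linarith
  · have hzero : l i₀ - τ * c i₀ = 0 := by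
      rw [hτ]; field_simp; ring
    have hsum : ∑ i ∈ s, (l i - τ * c i) • a i = ∑ i ∈ s, l i • a i := by
      simp only [sub_smul, Finset.sum_sub_distrib, mul_smul]
      rw [← Finset.smul_sum, hcsum, smul_zero, sub_zero]
    rw [← hsum, ← Finset.add_sum_erase _ _ hi₀s, hzero, zero_smul, zero_add]

lemma cone_carath {ι V : Type*} [DecidableEq ι] [AddCommGroup V] [Module ℝ V]
    (a : ι → V) (s : Finset ι) (l : ι → ℝ) (hl : ∀ i ∈ s, 0 ≤ l i) :
    ∃ t ⊆ s, LinearIndependent ℝ (fun i : t => a i) ∧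
      ∃ m : ι → ℝ, (∀ i, 0 ≤ m i) ∧ (∀ i, i ∉ t → m i = 0) ∧
        ∑ i ∈ t, m i • a i = ∑ i ∈ s, l i • a i := by
  classical
  induction s using Finset.strongInductionOn generalizing l with
  | _ s ih =>
    by_cases hind : LinearIndependent ℝ (fun i : s => a i)
    · refine ⟨s, Finset.Subset.refl s, hind, fun i => if i ∈ s then l i else 0, ?_, ?_, ?_⟩
      · intro i
        by_cases hi : i ∈ s
        · simpa [hi] using hl i hi
        · simp [hi]
      · intro i hi; simp [hi]
      · apply Finset.sum_congr rfl
        intro i hi; simp [hi]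
    · obtain ⟨g, hgsum, jj, hjj⟩ := Fintype.not_linearIndependent_iff.1 hind
      set c : ι → ℝ := fun i => if hi : i ∈ s then g ⟨i, hi⟩ else 0 with hc
      have hcsum : ∑ i ∈ s, c i • a i = 0 := by
        rw [← Finset.sum_attach s (fun i => c i • a i)]
        simpa [hc] using hgsum
      have hcne : c (jj : ι) ≠ 0 := by simp [hc, jj.2, hjj]
      have key : ∀ c' : ι → ℝ, (∑ i ∈ s, c' i • a i = 0) → (∃ i ∈ s, 0 < c' i) →
          ∃ t ⊆ s, LinearIndependent ℝ (fun i : t => a i) ∧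
            ∃ m : ι → ℝ, (∀ i, 0 ≤ m i) ∧ (∀ i, i ∉ t → m i = 0) ∧
              ∑ i ∈ t, m i • a i = ∑ i ∈ s, l i • a i := by
        intro c' hc'sum hc'pos
        obtain ⟨i₀, hi₀s, l', hl', hsum'⟩ := cone_step a s c' hc'sum hc'pos l hl
        obtain ⟨t, hts, hind', m, hm, hm0, hmsum⟩ :=
          ih (s.erase i₀) (Finset.erase_ssubset hi₀s) l' hl'
        exact ⟨t, hts.trans (Finset.erase_subset _ _), hind', m, hm, hm0,
          by rw [hmsum, hsum']⟩
      rcases lt_trichotomy (c (jj : ι)) 0 with hneg | hzero | hpos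
      · refine key (fun i => -c i) ?_ ⟨jj, jj.2, by simpa using hneg⟩
        simp only [neg_smul, Finset.sum_neg_distrib, hcsum, neg_zero]
      · exact absurd hzero hcne
      · exact key c hcsum ⟨jj, jj.2, hpos⟩



/-- The finitely generated cone of `a` as a set. -/
def fgCone {n d : ℕ} (a : Fin n → (Fin d → ℝ)) : Set (Fin d → ℝ) :=
  {x | ∃ l : Fin n → ℝ, (∀ i, 0 ≤ l i) ∧ x = ∑ i, l i • a i}

lemma fgCone_convex {n d : ℕ} (a : Fin n → (Fin d → ℝ)) : Convex ℝ (fgCone a) := by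
  rintro x ⟨l, hl, rfl⟩ y ⟨m, hm, rfl⟩ α β hα hβ hαβ
  refine ⟨fun i => α * l i + β * m i, fun i => add_nonneg (mul_nonneg hα (hl i)) (mul_nonneg hβ (hm i)), ?_⟩
  rw [Finset.smul_sum, Finset.smul_sum, ← Finset.sum_add_distrib]
  apply Finset.sum_congr rfl
  intro i _
  simp only [smul_smul]
  rw [add_smul]

lemma fgCone_smul {n d : ℕ} (a : Fin n → (Fin d → ℝ)) {x} (hx : x ∈ fgCone a) {c : ℝ}
    (hc : 0 ≤ c) : c • x ∈ fgCone a := by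
  obtain ⟨l, hl, rfl⟩ := hx
  refine ⟨fun i => c * l i, fun i => mul_nonneg hc (hl i), ?_⟩
  rw [Finset.smul_sum]
  simp [smul_smul]

lemma fgCone_isClosed {n d : ℕ} (a : Fin n → (Fin d → ℝ)) : IsClosed (fgCone a) := by
  classical
  have hdecomp : fgCone a = ⋃ (t : Finset (Fin n)) (_ : LinearIndependent ℝ (fun i : t => a i)),
      (fun m : t → ℝ => ∑ i, m i • a i) '' {m | ∀ i, 0 ≤ m i} := by
    ext x
    simp only [Set.mem_iUnion, Set.mem_image, Set.mem_setOf_eq]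
    constructor
    · rintro ⟨l, hl, rfl⟩
      obtain ⟨t, -, hind, m, hm, hm0, hmsum⟩ :=
        cone_carath a Finset.univ l (fun i _ => hl i)
      refine ⟨t, hind, fun i : t => m i, fun i => hm i, ?_⟩
      rw [← hmsum, Finset.univ_eq_attach, Finset.sum_attach t (fun i => m i • a i)]
    · rintro ⟨t, hind, m, hm, rfl⟩
      refine ⟨fun i => if hi : i ∈ t then m ⟨i, hi⟩ else 0, fun i => ?_, ?_⟩
      · by_cases hi : i ∈ t <;> simp [hi, hm]
      · have h1 : ∑ i ∈ t, (if hi : i ∈ t then m ⟨i, hi⟩ else (0:ℝ)) • a i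
            = ∑ i : Fin n, (if hi : i ∈ t then m ⟨i, hi⟩ else 0) • a i := by
          apply Finset.sum_subset (Finset.subset_univ t)
          intro i _ hi; simp [hi]
        rw [← h1, ← Finset.sum_attach t (fun i => (if hi : i ∈ t then m ⟨i, hi⟩ else (0:ℝ)) • a i),
          Finset.univ_eq_attach]
        apply Finset.sum_congr rfl
        intro i _
        simp [i.2]
  rw [hdecomp]
  apply isClosed_iUnion_of_finite
  intro t
  apply isClosed_iUnion_of_finite
  intro hind
  -- image of the closed orthant under an injective linear map
  let T : (↥t → ℝ) →ₗ[ℝ] (Fin d → ℝ) :=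
    { toFun := fun m => ∑ i, m i • a i
      map_add' := by
        intro x y; rw [← Finset.sum_add_distrib]; apply Finset.sum_congr rfl; intro i _
        rw [Pi.add_apply, add_smul]
      map_smul' := by
        intro c x; rw [Finset.smul_sum]; apply Finset.sum_congr rfl; intro i _
        rw [Pi.smul_apply, smul_smul]; rfl }
  have hinj : Function.Injective T := by
    rw [← LinearMap.ker_eq_bot, LinearMap.ker_eq_bot']
    intro m hm
    exact funext (Fintype.linearIndependent_iff.1 hind m hm)
  have hclosed : IsClosed ({m : ↥t → ℝ | ∀ i, 0 ≤ m i}) := by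
    have heq : {m : ↥t → ℝ | ∀ i, 0 ≤ m i} = ⋂ i, {m | 0 ≤ m i} := by ext; simp
    rw [heq]
    exact isClosed_iInter fun i => isClosed_le continuous_const (continuous_apply i)
  exact (T.isClosedEmbedding_of_injective
    (LinearMap.ker_eq_bot.2 hinj)).isClosedMap _ hclosed

lemma farkas {n d : ℕ} (a : Fin n → (Fin d → ℝ)) (y : Fin d → ℝ)
    (hy : ∀ w : Fin d → ℝ, (∀ i, a i ⬝ᵥ w ≤ 0) → y ⬝ᵥ w ≤ 0) :
    ∃ l : Fin n → ℝ, (∀ i, 0 ≤ l i) ∧ y = ∑ i, l i • a i := by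
  classical
  by_contra hyC
  have hyC' : y ∉ fgCone a := hyC
  obtain ⟨f, u, hfs, hfy⟩ := geometric_hahn_banach_closed_point
    (fgCone_convex a) (fgCone_isClosed a) hyC'
  have h0 : (0 : Fin d → ℝ) ∈ fgCone a := ⟨0, fun i => le_refl 0, by simp⟩
  have hu0 : 0 < u := by simpa using hfs 0 h0
  have hfle : ∀ x ∈ fgCone a, f x ≤ 0 := by
    intro x hx
    by_contra hpos
    push_neg at hpos
    have hc : (0:ℝ) ≤ u / f x := le_of_lt (div_pos hu0 hpos)
    have := hfs _ (fgCone_smul a hx hc)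
    rw [_root_.map_smul] at this
    simp only [smul_eq_mul] at this
    rw [div_mul_cancel₀ _ (ne_of_gt hpos)] at this
    exact lt_irrefl _ this
  -- represent f by a vector
  set w : Fin d → ℝ := fun k => f (Pi.single k 1) with hw
  have hrep : ∀ v : Fin d → ℝ, f v = v ⬝ᵥ w := by
    intro v
    have hv : v = ∑ k, v k • (Pi.single k 1 : Fin d → ℝ) := by
      funext j
      rw [Finset.sum_apply]
      simp [Pi.single_apply]
    conv_lhs => rw [hv]
    rw [map_sum]
    simp only [_root_.map_smul, smul_eq_mul]
    rfl
  have hai : ∀ i, a i ∈ fgCone a := by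
    intro i
    refine ⟨fun j => if j = i then 1 else 0, fun j => by positivity, ?_⟩
    simp [ite_smul]
  have haw : ∀ i, a i ⬝ᵥ w ≤ 0 := fun i => by rw [← hrep]; exact hfle _ (hai i)
  have : y ⬝ᵥ w ≤ 0 := hy w haw
  rw [← hrep] at this
  linarith [hfy, hu0]



noncomputable def obj (H : Matrix (Fin p) (Fin p) ℝ) (h : Fin p → ℝ) (g : Fin p → ℝ) : ℝ :=
  (1 / 2) * (g ⬝ᵥ H *ᵥ g) + h ⬝ᵥ g

lemma dot_symm (H : Matrix (Fin p) (Fin p) ℝ) (hE : Hᵀ = H) (x y : Fin p → ℝ) :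
    x ⬝ᵥ H *ᵥ y = y ⬝ᵥ H *ᵥ x := by
  rw [dotProduct_mulVec, ← mulVec_transpose, hE, dotProduct_comm]

lemma obj_expand (H : Matrix (Fin p) (Fin p) ℝ) (hE : Hᵀ = H) (h x y : Fin p → ℝ) :
    obj H h (x + y) = obj H h x + (H *ᵥ x + h) ⬝ᵥ y + (1/2) * (y ⬝ᵥ H *ᵥ y) := by
  simp only [obj, mulVec_add, dotProduct_add, add_dotProduct]
  rw [dotProduct_comm (H *ᵥ x) y, dot_symm H hE y x]
  ring

lemma transpose_eq (H : Matrix (Fin p) (Fin p) ℝ) (hH : H.PosDef) : Hᵀ = H := by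
  have := hH.isHermitian
  rwa [Matrix.IsHermitian, conjTranspose_eq_transpose_of_trivial] at this

lemma mulVec_row {m n : ℕ} (M : Matrix (Fin m) (Fin n) ℝ) (v : Fin n → ℝ) (i : Fin m) :
    (M *ᵥ v) i = M i ⬝ᵥ v := rfl

lemma dot_transpose_mulVec {m n : ℕ} (M : Matrix (Fin n) (Fin m) ℝ) (v : Fin n → ℝ)
    (w : Fin m → ℝ) : (Mᵀ *ᵥ v) ⬝ᵥ w = v ⬝ᵥ (M *ᵥ w) := by
  rw [mulVec_transpose, ← dotProduct_mulVec]

lemma quad_nonneg (H : Matrix (Fin p) (Fin p) ℝ) (hH : H.PosDef) (d : Fin p → ℝ) :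
    0 ≤ d ⬝ᵥ H *ᵥ d := by
  have := hH.posSemidef.dotProduct_mulVec_nonneg d
  simpa using this

lemma quad_pos (H : Matrix (Fin p) (Fin p) ℝ) (hH : H.PosDef) {d : Fin p → ℝ} (hd : d ≠ 0) :
    0 < d ⬝ᵥ H *ᵥ d := by
  have := hH.dotProduct_mulVec_pos hd
  simpa using this

lemma min_unique (H : Matrix (Fin p) (Fin p) ℝ) (hH : H.PosDef) (h : Fin p → ℝ)
    (S : Set (Fin p → ℝ)) (hmid : ∀ x ∈ S, ∀ y ∈ S, x + (1/2:ℝ) • (y - x) ∈ S)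
    {g₁ g₂ : Fin p → ℝ} (hg₁ : g₁ ∈ S) (hg₂ : g₂ ∈ S)
    (m₁ : ∀ g ∈ S, obj H h g₁ ≤ obj H h g) (m₂ : ∀ g ∈ S, obj H h g₂ ≤ obj H h g) :
    g₁ = g₂ := by
  have hE := transpose_eq H hH
  set d : Fin p → ℝ := g₂ - g₁ with hd
  have h2 : g₂ = g₁ + d := by rw [hd]; abel
  have heq : obj H h g₂ = obj H h g₁ := le_antisymm (m₂ g₁ hg₁) (m₁ g₂ hg₂)
  have e2 : obj H h g₂ = obj H h g₁ + (H *ᵥ g₁ + h) ⬝ᵥ d + (1/2) * (d ⬝ᵥ H *ᵥ d) := by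
    conv_lhs => rw [h2]
    rw [obj_expand H hE]
  have hmidS := hmid g₁ hg₁ g₂ hg₂
  have e3 : obj H h (g₁ + (1/2:ℝ) • d) = obj H h g₁ + (1/2) * ((H *ᵥ g₁ + h) ⬝ᵥ d)
      + (1/8) * (d ⬝ᵥ H *ᵥ d) := by
    rw [obj_expand H hE]
    rw [dotProduct_smul, mulVec_smul, smul_dotProduct, dotProduct_smul]
    simp only [smul_eq_mul]
    ring
  have hle := m₁ _ hmidS
  rw [e3] at hle
  have hq : d ⬝ᵥ H *ᵥ d ≤ 0 := by linarith
  have hd0 : d = 0 := by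
    by_contra hne
    exact absurd hq (not_le.2 (quad_pos H hH hne))
  have : g₂ - g₁ = 0 := hd0
  exact (sub_eq_zero.1 this).symm

lemma kkt_sufficient {n : ℕ} (H : Matrix (Fin p) (Fin p) ℝ) (hH : H.PosDef) (h : Fin p → ℝ)
    (A : Matrix (Fin q) (Fin p) ℝ) (rhs : Fin q → ℝ)
    (AI : Matrix (Fin n) (Fin p) ℝ) (bE : Fin n → ℝ)
    (hsub : ∀ i, ∃ j, AI i = A j ∧ bE i = rhs j)
    (g lam : _) (hfeas : A *ᵥ g ≤ rhs) (hstat : H *ᵥ g + h + AIᵀ *ᵥ lam = 0)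
    (hlam : ∀ i, 0 ≤ lam i) (hcomp : AI *ᵥ g = bE) :
    ∀ g', A *ᵥ g' ≤ rhs → obj H h g ≤ obj H h g' := by
  intro g' hg'
  have hE := transpose_eq H hH
  have h2 : g' = g + (g' - g) := by abel
  conv_rhs => rw [h2]
  rw [obj_expand H hE]
  have hgrad : H *ᵥ g + h = -(AIᵀ *ᵥ lam) := eq_neg_of_add_eq_zero_left hstat
  have hdot : (H *ᵥ g + h) ⬝ᵥ (g' - g) = -(lam ⬝ᵥ (AI *ᵥ g' - bE)) := by
    rw [hgrad, neg_dotProduct, dot_transpose_mulVec, mulVec_sub, hcomp]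
  have hterm : lam ⬝ᵥ (AI *ᵥ g' - bE) ≤ 0 := by
    simp only [dotProduct]
    apply Finset.sum_nonpos
    intro i _
    obtain ⟨j, hrow, hrhs⟩ := hsub i
    have h1 : (AI *ᵥ g') i ≤ bE i := by
      rw [mulVec_row, hrow, hrhs]
      exact hg' j
    have h2 := hlam i
    have h3 : (AI *ᵥ g' - bE) i = (AI *ᵥ g') i - bE i := rfl
    rw [h3]
    nlinarith
  have hquad := quad_nonneg H hH (g' - g)
  rw [hdot]
  linarith

lemma kkt_necessary (H : Matrix (Fin p) (Fin p) ℝ) (hH : H.PosDef) (h : Fin p → ℝ)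
    (A : Matrix (Fin q) (Fin p) ℝ) (rhs : Fin q → ℝ) (g : Fin p → ℝ)
    (hfeas : A *ᵥ g ≤ rhs)
    (hmin : ∀ g', A *ᵥ g' ≤ rhs → obj H h g ≤ obj H h g') :
    ∃ t : Finset (Fin q), (∀ i ∈ t, (A *ᵥ g) i = rhs i) ∧
      LinearIndependent ℝ (fun i : t => A i) ∧
      ∃ m : Fin q → ℝ, (∀ i, 0 ≤ m i) ∧ (∀ i, i ∉ t → m i = 0) ∧
        H *ᵥ g + h + ∑ i ∈ t, m i • A i = 0 := by
  classical
  have hE := transpose_eq H hH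
  -- directional optimality
  have hdir : ∀ d : Fin p → ℝ, (∀ i, (A *ᵥ g) i = rhs i → (A *ᵥ d) i ≤ 0) →
      0 ≤ (H *ᵥ g + h) ⬝ᵥ d := by
    intro d hd
    by_contra hneg
    push_neg at hneg
    have hd0 : d ≠ 0 := by
      rintro rfl
      simp at hneg
    have hq : 0 < d ⬝ᵥ H *ᵥ d := quad_pos H hH hd0
    -- feasible step size
    set J : Finset (Fin q) := Finset.univ.filter (fun i => 0 < (A *ᵥ d) i) with hJdef
    have hslack : ∀ i ∈ J, 0 < (rhs i - (A *ᵥ g) i) / (A *ᵥ d) i := by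
      intro i hi
      have hAd : 0 < (A *ᵥ d) i := (Finset.mem_filter.1 hi).2
      have hact : ¬((A *ᵥ g) i = rhs i) := fun hc => absurd (hd i hc) (not_le.2 hAd)
      have := hfeas i
      have hlt : (A *ᵥ g) i < rhs i := lt_of_le_of_ne this hact
      exact div_pos (by linarith) hAd
    set t₀ : ℝ := if hJ : J.Nonempty then
        min 1 (J.inf' hJ (fun i => (rhs i - (A *ᵥ g) i) / (A *ᵥ d) i)) else 1 with ht₀def
    have ht₀pos : 0 < t₀ := by
      rw [ht₀def]
      split_ifs with hJ
      · apply lt_min one_pos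
        obtain ⟨i, hi, hival⟩ := J.exists_mem_eq_inf' hJ (fun i => (rhs i - (A *ᵥ g) i) / (A *ᵥ d) i)
        rw [hival]
        exact hslack i hi
      · exact one_pos
    have ht₀le : ∀ i ∈ J, t₀ ≤ (rhs i - (A *ᵥ g) i) / (A *ᵥ d) i := by
      intro i hi
      have hJne : J.Nonempty := ⟨i, hi⟩
      rw [ht₀def, dif_pos hJne]
      exact le_trans (min_le_right _ _) (Finset.inf'_le _ hi)
    have hfeast : ∀ t' : ℝ, 0 < t' → t' ≤ t₀ → A *ᵥ (g + t' • d) ≤ rhs := by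
      intro t' ht'pos ht'le i
      rw [mulVec_add, mulVec_smul]
      simp only [Pi.add_apply, Pi.smul_apply, smul_eq_mul]
      by_cases hAd : 0 < (A *ᵥ d) i
      · have hiJ : i ∈ J := Finset.mem_filter.2 ⟨Finset.mem_univ i, hAd⟩
        have := ht₀le i hiJ
        have h2 : t' ≤ (rhs i - (A *ᵥ g) i) / (A *ᵥ d) i := le_trans ht'le this
        rw [le_div_iff₀ hAd] at h2
        linarith
      · have : t' * (A *ᵥ d) i ≤ 0 :=
          mul_nonpos_of_nonneg_of_nonpos ht'pos.le (not_lt.1 hAd)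
        have := hfeas i
        linarith
    set grd : ℝ := (H *ᵥ g + h) ⬝ᵥ d with hgrd
    set t' : ℝ := min t₀ (-grd / (d ⬝ᵥ H *ᵥ d)) with ht'def
    have ht'pos : 0 < t' := lt_min ht₀pos (div_pos (by linarith) hq)
    have hfeas' := hfeast t' ht'pos (min_le_left _ _)
    have hle := hmin _ hfeas'
    rw [obj_expand H hE] at hle
    rw [dotProduct_smul, mulVec_smul, smul_dotProduct, dotProduct_smul] at hle
    simp only [smul_eq_mul] at hle
    have hb : t' ≤ -grd / (d ⬝ᵥ H *ᵥ d) := min_le_right _ _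
    rw [le_div_iff₀ hq] at hb
    nlinarith
  -- Farkas on the active constraints
  set act : Finset (Fin q) := Finset.univ.filter (fun i => (A *ᵥ g) i = rhs i) with hact
  set e : Fin act.card → Fin q := fun i => act.orderEmbOfFin rfl i with he
  set y : Fin p → ℝ := -(H *ᵥ g + h) with hy
  have hfark : ∀ w, (∀ i : Fin act.card, A (e i) ⬝ᵥ w ≤ 0) → y ⬝ᵥ w ≤ 0 := by
    intro w hw
    rw [hy, neg_dotProduct, neg_nonpos]
    apply hdir
    intro i hi
    have hiact : i ∈ (act : Set (Fin q)) := by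
      rw [hact]; simp [hi]
    rw [← Finset.range_orderEmbOfFin act rfl] at hiact
    obtain ⟨j, hj⟩ := hiact
    rw [mulVec_row]
    have : e j = i := by rw [he]; exact hj
    rw [← this]
    exact hw j
  obtain ⟨l, hl, hlsum⟩ := farkas (fun i => A (e i)) y hfark
  -- transfer the coefficients to `Fin q`
  set σ : Fin act.card ≃ ↥act := (act.orderIsoOfFin rfl).toEquiv with hσ
  set lq : Fin q → ℝ := fun j => if hj : j ∈ act then l (σ.symm ⟨j, hj⟩) else 0 with hlq
  have hlqsum : ∑ j ∈ act, lq j • A j = y := by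
    rw [← Finset.sum_attach act (fun j => lq j • A j), ← Finset.univ_eq_attach,
      ← Equiv.sum_comp σ (fun x : ↥act => lq ↑x • A ↑x), hlsum]
    apply Finset.sum_congr rfl
    intro i _
    have hcoe : ((σ i : ↥act) : Fin q) = e i := by
      rw [hσ, he]
      exact Finset.coe_orderIsoOfFin_apply act rfl i
    rw [hcoe, hlq]
    have hmem : e i ∈ act := by rw [he]; exact act.orderEmbOfFin_mem rfl i
    dsimp only
    rw [dif_pos hmem]
    have hsub : (⟨e i, hmem⟩ : ↥act) = σ i := Subtype.ext hcoe.symm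
    rw [hsub, Equiv.symm_apply_apply]
  have hlqnn : ∀ j ∈ act, 0 ≤ lq j := by
    intro j hj
    rw [hlq]
    dsimp only
    rw [dif_pos hj]
    exact hl _
  obtain ⟨t, hts, hind, m, hm, hm0, hmsum⟩ := cone_carath (fun j : Fin q => A j) act lq hlqnn
  refine ⟨t, ?_, hind, m, hm, hm0, ?_⟩
  · intro i hi
    have := hts hi
    rw [hact] at this
    exact (Finset.mem_filter.1 this).2
  · rw [hmsum, hlqsum, hy]
    abel

lemma forall_fin_append {α : Type*} {m k : ℕ} (u : Fin m → α) (v : Fin k → α) (P : α → Prop) :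
    (∀ i, P (Fin.append u v i)) ↔ (∀ i, P (u i)) ∧ (∀ i, P (v i)) := by
  constructor
  · intro hAll
    constructor
    · intro i; have := hAll (Fin.castAdd k i); rwa [Fin.append_left] at this
    · intro i; have := hAll (Fin.natAdd m i); rwa [Fin.append_right] at this
  · rintro ⟨h1, h2⟩ i
    refine Fin.addCases (fun j => ?_) (fun j => ?_) i
    · rw [Fin.append_left]; exact h1 j
    · rw [Fin.append_right]; exact h2 j

lemma sum_over_finset {ι α : Type*} [LinearOrder ι] [AddCommMonoid α] (t : Finset ι)
    (F : ι → α) : ∑ j : Fin t.card, F (t.orderEmbOfFin rfl j) = ∑ i ∈ t, F i := by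
  rw [← Finset.sum_attach t F, ← Finset.univ_eq_attach,
    ← Equiv.sum_comp (t.orderIsoOfFin rfl).toEquiv (fun x : ↥t => F ↑x)]
  apply Finset.sum_congr rfl
  intro j _
  simp only [RelIso.coe_fn_toEquiv]
  rw [Finset.coe_orderIsoOfFin_apply]

lemma indep_over_finset {ι V : Type*} [LinearOrder ι] [AddCommGroup V] [Module ℝ V]
    (t : Finset ι) (F : ι → V) (hF : LinearIndependent ℝ (fun i : ↥t => F ↑i)) :
    LinearIndependent ℝ (fun j : Fin t.card => F (t.orderEmbOfFin rfl j)) := by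
  have h1 := (linearIndependent_equiv ((t.orderIsoOfFin rfl).toEquiv)
    (f := fun i : ↥t => F ↑i)).2 hF
  have h2 : ((fun i : ↥t => F ↑i) ∘ (t.orderIsoOfFin rfl).toEquiv) =
      fun j : Fin t.card => F (t.orderEmbOfFin rfl j) := by
    funext j
    simp only [Function.comp_apply, RelIso.coe_fn_toEquiv]
    rw [Finset.coe_orderIsoOfFin_apply]
  rwa [h2] at h1

lemma transpose_mulVec_eq_sum' {m n : ℕ} (M : Matrix (Fin n) (Fin m) ℝ) (v : Fin n → ℝ) :
    Mᵀ *ᵥ v = ∑ j, v j • M j := by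
  funext k
  simp [Matrix.mulVec, dotProduct, transpose_apply, Finset.sum_apply, mul_comm]

lemma G_posdef {n : ℕ} (H : Matrix (Fin p) (Fin p) ℝ) (hH : H.PosDef)
    (B : Matrix (Fin n) (Fin p) ℝ) (hB : LinearIndependent ℝ (fun i => B i)) :
    (B * H⁻¹ * Bᵀ).PosDef := by
  have hHinv : H⁻¹.PosDef := hH.inv
  have hsym : H⁻¹ᵀ = H⁻¹ := by
    have := hHinv.isHermitian
    rwa [Matrix.IsHermitian, conjTranspose_eq_transpose_of_trivial] at this
  refine Matrix.PosDef.of_dotProduct_mulVec_pos ?_ ?_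
  · rw [Matrix.IsHermitian, conjTranspose_eq_transpose_of_trivial,
      Matrix.transpose_mul, Matrix.transpose_mul, Matrix.transpose_transpose, hsym,
      Matrix.mul_assoc]
  · intro x hx
    have hw : Bᵀ *ᵥ x ≠ 0 := by
      intro hc
      apply hx
      rw [transpose_mulVec_eq_sum'] at hc
      have hz := Fintype.linearIndependent_iff.1 hB x hc
      funext i; exact hz i
    have hpos := hHinv.dotProduct_mulVec_pos hw
    simp only [star_trivial] at hpos ⊢
    have hcalc : x ⬝ᵥ (B * H⁻¹ * Bᵀ) *ᵥ x = (Bᵀ *ᵥ x) ⬝ᵥ H⁻¹ *ᵥ (Bᵀ *ᵥ x) := by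
      rw [Matrix.mul_assoc, ← mulVec_mulVec, ← mulVec_mulVec, dotProduct_mulVec x B,
        ← mulVec_transpose]
    rw [hcalc]
    exact hpos


noncomputable section

def mAI (A : Matrix (Fin q) (Fin p) ℝ) (I : Finset (Fin q)) :
    Matrix (Fin I.card) (Fin p) ℝ := Matrix.of fun i k => A (I.orderEmbOfFin rfl i) k

def mEI (E : Matrix (Fin q) (Fin r) ℝ) (I : Finset (Fin q)) :
    Matrix (Fin I.card) (Fin r) ℝ := Matrix.of fun i k => E (I.orderEmbOfFin rfl i) k

def vbI (b : Fin q → ℝ) (I : Finset (Fin q)) : Fin I.card → ℝ :=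
  fun i => b (I.orderEmbOfFin rfl i)

def mG (H : Matrix (Fin p) (Fin p) ℝ) (A : Matrix (Fin q) (Fin p) ℝ) (I : Finset (Fin q)) :
    Matrix (Fin I.card) (Fin I.card) ℝ := mAI A I * H⁻¹ * (mAI A I)ᵀ

def mL (H : Matrix (Fin p) (Fin p) ℝ) (A : Matrix (Fin q) (Fin p) ℝ)
    (E : Matrix (Fin q) (Fin r) ℝ) (I : Finset (Fin q)) : Matrix (Fin I.card) (Fin r) ℝ :=
  -((mG H A I)⁻¹ * mEI E I)

def vmu (H : Matrix (Fin p) (Fin p) ℝ) (h : Fin p → ℝ) (A : Matrix (Fin q) (Fin p) ℝ)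
    (b : Fin q → ℝ) (I : Finset (Fin q)) : Fin I.card → ℝ :=
  -((mG H A I)⁻¹ *ᵥ (mAI A I *ᵥ (H⁻¹ *ᵥ h) + vbI b I))

def mC (H : Matrix (Fin p) (Fin p) ℝ) (A : Matrix (Fin q) (Fin p) ℝ)
    (E : Matrix (Fin q) (Fin r) ℝ) (I : Finset (Fin q)) : Matrix (Fin p) (Fin r) ℝ :=
  -(H⁻¹ * (mAI A I)ᵀ * mL H A E I)

def vc (H : Matrix (Fin p) (Fin p) ℝ) (h : Fin p → ℝ) (A : Matrix (Fin q) (Fin p) ℝ)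
    (b : Fin q → ℝ) (I : Finset (Fin q)) : Fin p → ℝ :=
  -(H⁻¹ *ᵥ (h + (mAI A I)ᵀ *ᵥ vmu H h A b I))

def vlam (H : Matrix (Fin p) (Fin p) ℝ) (h : Fin p → ℝ) (A : Matrix (Fin q) (Fin p) ℝ)
    (E : Matrix (Fin q) (Fin r) ℝ) (b : Fin q → ℝ) (I : Finset (Fin q)) (θ : Fin r → ℝ) :
    Fin I.card → ℝ := mL H A E I *ᵥ θ + vmu H h A b I

def vg (H : Matrix (Fin p) (Fin p) ℝ) (h : Fin p → ℝ) (A : Matrix (Fin q) (Fin p) ℝ)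
    (E : Matrix (Fin q) (Fin r) ℝ) (b : Fin q → ℝ) (I : Finset (Fin q)) (θ : Fin r → ℝ) :
    Fin p → ℝ := mC H A E I *ᵥ θ + vc H h A b I

def Region (H : Matrix (Fin p) (Fin p) ℝ) (h : Fin p → ℝ) (A : Matrix (Fin q) (Fin p) ℝ)
    (E : Matrix (Fin q) (Fin r) ℝ) (b : Fin q → ℝ) (I : Finset (Fin q)) : Set (Fin r → ℝ) :=
  {θ | (∀ i, 0 ≤ vlam H h A E b I θ i) ∧ (∀ j, (A *ᵥ vg H h A E b I θ) j ≤ (b + E *ᵥ θ) j)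
     ∧ (∀ i, vbI b I i + (mEI E I *ᵥ θ) i ≤ (mAI A I *ᵥ vg H h A E b I θ) i)}

lemma vg_eq (H : Matrix (Fin p) (Fin p) ℝ) (h : Fin p → ℝ) (A : Matrix (Fin q) (Fin p) ℝ)
    (E : Matrix (Fin q) (Fin r) ℝ) (b : Fin q → ℝ) (I : Finset (Fin q)) (θ : Fin r → ℝ) :
    vg H h A E b I θ = -(H⁻¹ *ᵥ (h + (mAI A I)ᵀ *ᵥ vlam H h A E b I θ)) := by
  simp only [vg, mC, vc, vlam, neg_mulVec, mulVec_add, ← mulVec_mulVec]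
  abel

lemma region_stat (H : Matrix (Fin p) (Fin p) ℝ) (hH : H.PosDef) (h : Fin p → ℝ)
    (A : Matrix (Fin q) (Fin p) ℝ) (E : Matrix (Fin q) (Fin r) ℝ) (b : Fin q → ℝ)
    (I : Finset (Fin q)) (θ : Fin r → ℝ) :
    H *ᵥ vg H h A E b I θ + h + (mAI A I)ᵀ *ᵥ vlam H h A E b I θ = 0 := by
  rw [vg_eq, mulVec_neg, mulVec_mulVec, Matrix.mul_nonsing_inv H
    ((Matrix.isUnit_iff_isUnit_det H).1 hH.isUnit), one_mulVec]
  abel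


lemma region_min (H : Matrix (Fin p) (Fin p) ℝ) (hH : H.PosDef) (h : Fin p → ℝ)
    (A : Matrix (Fin q) (Fin p) ℝ) (E : Matrix (Fin q) (Fin r) ℝ) (b : Fin q → ℝ)
    (I : Finset (Fin q)) (θ : Fin r → ℝ) (hθ : θ ∈ Region H h A E b I) :
    (A *ᵥ vg H h A E b I θ ≤ b + E *ᵥ θ) ∧
    ∀ g', A *ᵥ g' ≤ b + E *ᵥ θ → obj H h (vg H h A E b I θ) ≤ obj H h g' := by
  obtain ⟨hlam, hfeas, hcomp⟩ := hθ
  have hfeas' : A *ᵥ vg H h A E b I θ ≤ b + E *ᵥ θ := fun j => hfeas j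
  refine ⟨hfeas', ?_⟩
  apply kkt_sufficient H hH h A (b + E *ᵥ θ) (mAI A I)
    (fun i => vbI b I i + (mEI E I *ᵥ θ) i) ?_ _ (vlam H h A E b I θ) hfeas'
    (region_stat H hH h A E b I θ) hlam ?_
  · intro i
    exact ⟨I.orderEmbOfFin rfl i, rfl, rfl⟩
  · funext i
    exact le_antisymm (hfeas (I.orderEmbOfFin rfl i)) (hcomp i)

lemma region_poly (H : Matrix (Fin p) (Fin p) ℝ) (h : Fin p → ℝ)
    (A : Matrix (Fin q) (Fin p) ℝ) (E : Matrix (Fin q) (Fin r) ℝ) (b : Fin q → ℝ)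
    (I : Finset (Fin q)) :
    ∃ (s : ℕ) (a : Fin s → (Fin r → ℝ)) (β : Fin s → ℝ),
      Region H h A E b I = {θ : Fin r → ℝ | ∀ i : Fin s, a i ⬝ᵥ θ ≤ β i} := by
  classical
  set n := I.card with hn
  refine ⟨n + (q + n),
    fun i => (Fin.append (fun i : Fin n => (-(mL H A E I i), vmu H h A b I i))
      (Fin.append (fun j : Fin q => ((A * mC H A E I - E) j, b j - (A *ᵥ vc H h A b I) j))
        (fun i : Fin n => ((mEI E I - mAI A I * mC H A E I) i,
          (mAI A I *ᵥ vc H h A b I) i - vbI b I i))) i).1,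
    fun i => (Fin.append (fun i : Fin n => (-(mL H A E I i), vmu H h A b I i))
      (Fin.append (fun j : Fin q => ((A * mC H A E I - E) j, b j - (A *ᵥ vc H h A b I) j))
        (fun i : Fin n => ((mEI E I - mAI A I * mC H A E I) i,
          (mAI A I *ᵥ vc H h A b I) i - vbI b I i))) i).2, ?_⟩
  ext θ
  simp only [Region, Set.mem_setOf_eq]
  rw [forall_fin_append _ _ (fun c : (Fin r → ℝ) × ℝ => c.1 ⬝ᵥ θ ≤ c.2),
    forall_fin_append _ _ (fun c : (Fin r → ℝ) × ℝ => c.1 ⬝ᵥ θ ≤ c.2)]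
  have hb1 : ∀ i : Fin n, ((-(mL H A E I i)) ⬝ᵥ θ ≤ vmu H h A b I i) ↔
      0 ≤ vlam H h A E b I θ i := by
    intro i
    have hv : vlam H h A E b I θ i = mL H A E I i ⬝ᵥ θ + vmu H h A b I i := rfl
    rw [hv, neg_dotProduct]
    constructor <;> intro <;> linarith
  have hb2 : ∀ j : Fin q, ((A * mC H A E I - E) j ⬝ᵥ θ ≤ b j - (A *ᵥ vc H h A b I) j) ↔
      (A *ᵥ vg H h A E b I θ) j ≤ (b + E *ᵥ θ) j := by
    intro j
    have e1 : (A *ᵥ vg H h A E b I θ) j =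
        (A * mC H A E I) j ⬝ᵥ θ + (A *ᵥ vc H h A b I) j := by
      simp only [vg, mulVec_add, mulVec_mulVec, Pi.add_apply]
      rfl
    have e2 : (A * mC H A E I - E) j ⬝ᵥ θ = (A * mC H A E I) j ⬝ᵥ θ - E j ⬝ᵥ θ := by
      have hr : (A * mC H A E I - E) j = (A * mC H A E I) j - E j := rfl
      rw [hr, sub_dotProduct]
    have e3 : (b + E *ᵥ θ) j = b j + E j ⬝ᵥ θ := rfl
    rw [e1, e2, e3]
    constructor <;> intro <;> linarith
  have hb3 : ∀ i : Fin n, ((mEI E I - mAI A I * mC H A E I) i ⬝ᵥ θ ≤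
      (mAI A I *ᵥ vc H h A b I) i - vbI b I i) ↔
      vbI b I i + (mEI E I *ᵥ θ) i ≤ (mAI A I *ᵥ vg H h A E b I θ) i := by
    intro i
    have e1 : (mAI A I *ᵥ vg H h A E b I θ) i =
        (mAI A I * mC H A E I) i ⬝ᵥ θ + (mAI A I *ᵥ vc H h A b I) i := by
      simp only [vg, mulVec_add, mulVec_mulVec, Pi.add_apply]
      rfl
    have e2 : (mEI E I - mAI A I * mC H A E I) i ⬝ᵥ θ =
        mEI E I i ⬝ᵥ θ - (mAI A I * mC H A E I) i ⬝ᵥ θ := by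
      have hr : (mEI E I - mAI A I * mC H A E I) i = mEI E I i - (mAI A I * mC H A E I) i := rfl
      rw [hr, sub_dotProduct]
    have e3 : (mEI E I *ᵥ θ) i = mEI E I i ⬝ᵥ θ := rfl
    rw [e1, e2, e3]
    constructor <;> intro <;> linarith
  constructor
  · rintro ⟨h1, h2, h3⟩
    exact ⟨fun i => (hb1 i).2 (h1 i), fun j => (hb2 j).2 (h2 j), fun i => (hb3 i).2 (h3 i)⟩
  · rintro ⟨h1, h2, h3⟩
    exact ⟨fun i => (hb1 i).1 (h1 i), fun j => (hb2 j).1 (h2 j), fun i => (hb3 i).1 (h3 i)⟩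

end
end MpQPAux

open MpQPAux

/-- piecewise affine structure in Theorem 1, multiparametric
quadratic programming: for `H` symmetric positive definite, if the feasible
parameter set `Θ = {θ : ∃ g, A g ≤ b + E θ}` is nonempty and compact and `g*(θ)`
denotes the unique minimizer of `½ gᵀ H g + hᵀ g` over `{g : A g ≤ b + E θ}`,
then `Θ` is covered by finitely many closed convex polytopes (each a finite
intersection of closed half-spaces) on each of which `g*` is affine. -/
theorem mpQP_minimizer_piecewise_affine {p q r : ℕ}
    (H : Matrix (Fin p) (Fin p) ℝ) (hH : H.PosDef) (h : Fin p → ℝ)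
    (A : Matrix (Fin q) (Fin p) ℝ) (E : Matrix (Fin q) (Fin r) ℝ) (b : Fin q → ℝ)
    (hΘne : {θ : Fin r → ℝ | ∃ g : Fin p → ℝ, A.mulVec g ≤ b + E.mulVec θ}.Nonempty)
    (hΘcomp : IsCompact {θ : Fin r → ℝ | ∃ g : Fin p → ℝ, A.mulVec g ≤ b + E.mulVec θ})
    (gstar : (Fin r → ℝ) → (Fin p → ℝ))
    (hgstar : ∀ θ : Fin r → ℝ, (∃ g : Fin p → ℝ, A.mulVec g ≤ b + E.mulVec θ) →
      A.mulVec (gstar θ) ≤ b + E.mulVec θ ∧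
        ∀ g : Fin p → ℝ, A.mulVec g ≤ b + E.mulVec θ →
          (1 / 2) * (gstar θ ⬝ᵥ H.mulVec (gstar θ)) + h ⬝ᵥ gstar θ ≤
            (1 / 2) * (g ⬝ᵥ H.mulVec g) + h ⬝ᵥ g) :
    ∃ (M : ℕ) (Θs : Fin M → Set (Fin r → ℝ))
      (C : Fin M → Matrix (Fin p) (Fin r) ℝ) (c : Fin M → (Fin p → ℝ)),
      (∀ k : Fin M, ∃ (s : ℕ) (a : Fin s → (Fin r → ℝ)) (β : Fin s → ℝ),
        Θs k = {θ : Fin r → ℝ | ∀ i : Fin s, a i ⬝ᵥ θ ≤ β i}) ∧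
      {θ : Fin r → ℝ | ∃ g : Fin p → ℝ, A.mulVec g ≤ b + E.mulVec θ} = ⋃ k, Θs k ∧
      ∀ k : Fin M, ∀ θ ∈ Θs k, gstar θ = (C k).mulVec θ + c k := by
  classical
  -- midpoint property of the feasible sets
  have hmid : ∀ θ : Fin r → ℝ, ∀ x ∈ {g | A *ᵥ g ≤ b + E *ᵥ θ},
      ∀ y ∈ {g | A *ᵥ g ≤ b + E *ᵥ θ}, x + (1/2:ℝ) • (y - x) ∈ {g | A *ᵥ g ≤ b + E *ᵥ θ} := by
    intro θ x hx y hy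
    simp only [Set.mem_setOf_eq, Pi.le_def] at hx hy ⊢
    intro j
    rw [mulVec_add, mulVec_smul, mulVec_sub]
    simp only [Pi.add_apply, Pi.smul_apply, Pi.sub_apply, smul_eq_mul]
    have hbj : (b + E *ᵥ θ) j = b j + (E *ᵥ θ) j := rfl
    linarith [hx j, hy j, hbj]
  have hreg_gstar : ∀ (I : Finset (Fin q)) (θ : Fin r → ℝ), θ ∈ Region H h A E b I →
      gstar θ = vg H h A E b I θ := by
    intro I θ hθ
    obtain ⟨hfeasg, hming⟩ := region_min H hH h A E b I θ hθ
    obtain ⟨hfeas', hmin'⟩ := hgstar θ ⟨_, hfeasg⟩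
    exact min_unique H hH h {g | A *ᵥ g ≤ b + E *ᵥ θ} (hmid θ) hfeas' hfeasg
      (fun g hg => hmin' g hg) (fun g hg => hming g hg)
  have hreg_sub : ∀ I : Finset (Fin q), Region H h A E b I ⊆
      {θ : Fin r → ℝ | ∃ g : Fin p → ℝ, A *ᵥ g ≤ b + E *ᵥ θ} := by
    intro I θ hθ
    exact ⟨_, fun j => hθ.2.1 j⟩
  have hcover : ∀ θ ∈ {θ : Fin r → ℝ | ∃ g : Fin p → ℝ, A *ᵥ g ≤ b + E *ᵥ θ},
      ∃ I : Finset (Fin q), θ ∈ Region H h A E b I := by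
    intro θ hθ
    obtain ⟨hfeas', hmin'⟩ := hgstar θ hθ
    obtain ⟨t, hact, hind, m, hm, hm0, hstat⟩ := kkt_necessary H hH h A (b + E *ᵥ θ)
      (gstar θ) hfeas' (fun g' hg' => hmin' g' hg')
    set g := gstar θ with hg
    set e : Fin t.card → Fin q := fun i => t.orderEmbOfFin rfl i with he
    set lamv : Fin t.card → ℝ := fun i => m (e i) with hlamv
    have hsum : (mAI A t)ᵀ *ᵥ lamv = ∑ i ∈ t, m i • A i := by
      rw [transpose_mulVec_eq_sum', ← sum_over_finset t (fun i => m i • A i)]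
      rfl
    have hst : H *ᵥ g + h + (mAI A t)ᵀ *ᵥ lamv = 0 := by rw [hsum]; exact hstat
    have hindrows : LinearIndependent ℝ (fun j : Fin t.card => mAI A t j) :=
      indep_over_finset t (fun i => A i) hind
    have hG : (mG H A t).PosDef := G_posdef H hH (mAI A t) hindrows
    have hGdet : IsUnit (mG H A t).det := (Matrix.isUnit_iff_isUnit_det _).1 hG.isUnit
    have hGinv : (mG H A t)⁻¹ * mG H A t = 1 := Matrix.nonsing_inv_mul _ hGdet
    have hHdet : IsUnit H.det := (Matrix.isUnit_iff_isUnit_det H).1 hH.isUnit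
    have hHinv : H⁻¹ * H = 1 := Matrix.nonsing_inv_mul H hHdet
    have hg_eq : g = -(H⁻¹ *ᵥ (h + (mAI A t)ᵀ *ᵥ lamv)) := by
      have h1 : H *ᵥ g = -(h + (mAI A t)ᵀ *ᵥ lamv) := by
        have h0 := hst
        rw [add_assoc] at h0
        exact eq_neg_of_add_eq_zero_left h0
      calc g = (H⁻¹ * H) *ᵥ g := by rw [hHinv, one_mulVec]
      _ = H⁻¹ *ᵥ (H *ᵥ g) := by rw [← mulVec_mulVec]
      _ = -(H⁻¹ *ᵥ (h + (mAI A t)ᵀ *ᵥ lamv)) := by rw [h1, mulVec_neg]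
    have hactive : mAI A t *ᵥ g = vbI b t + mEI E t *ᵥ θ := by
      funext i
      have hmem : e i ∈ t := t.orderEmbOfFin_mem rfl i
      exact hact (e i) hmem
    have hGlam : mG H A t *ᵥ lamv =
        -(mAI A t *ᵥ (H⁻¹ *ᵥ h) + (vbI b t + mEI E t *ᵥ θ)) := by
      have h2 : mAI A t *ᵥ g = -(mAI A t *ᵥ (H⁻¹ *ᵥ h)) - mG H A t *ᵥ lamv := by
        rw [hg_eq, mG, Matrix.mul_assoc]
        simp only [mulVec_neg, mulVec_add, ← mulVec_mulVec]
        abel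
      rw [hactive] at h2
      rw [h2]
      abel
    have hlam_eq : vlam H h A E b t θ = lamv := by
      have hcalc : vlam H h A E b t θ = (mG H A t)⁻¹ *ᵥ (mG H A t *ᵥ lamv) := by
        rw [vlam, mL, vmu, hGlam]
        simp only [neg_mulVec, mulVec_neg, ← mulVec_mulVec, mulVec_add]
        abel
      rw [hcalc, mulVec_mulVec, hGinv, one_mulVec]
    have hg2 : vg H h A E b t θ = g := by
      rw [vg_eq, hlam_eq, ← hg_eq]
    refine ⟨t, ⟨fun i => ?_, fun j => ?_, fun i => ?_⟩⟩
    · rw [hlam_eq]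
      exact hm (e i)
    · rw [hg2]
      exact hfeas' j
    · rw [hg2, hactive]
      exact le_of_eq rfl
  refine ⟨Fintype.card (Finset (Fin q)),
    fun k => Region H h A E b ((Fintype.equivFin (Finset (Fin q))).symm k),
    fun k => mC H A E ((Fintype.equivFin (Finset (Fin q))).symm k),
    fun k => vc H h A b ((Fintype.equivFin (Finset (Fin q))).symm k), ?_, ?_, ?_⟩
  · intro k
    exact region_poly H h A E b _
  · apply Set.eq_of_subset_of_subset
    · intro θ hθ
      obtain ⟨I, hI⟩ := hcover θ hθ
      exact Set.mem_iUnion.2 ⟨Fintype.equivFin (Finset (Fin q)) I, by simpa using hI⟩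
    · intro θ hθ
      obtain ⟨k, hk⟩ := Set.mem_iUnion.1 hθ
      exact hreg_sub _ hk
  · intro k θ hθ
    exact hreg_gstar _ θ hθ
end
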